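/- arXiv:2107.05798 — 8 statements merged into one kernel-verified Lean document; each statement's English description precedes it below -/
import Mathlib

section
/- Performance difference lemma (Lemma 1): For any two policies π' and π of a finite MDP, the difference of normalized returns satisfies J^{π'} − J^{π} = ∑_{s∈S} d^{π'}(s) ∑_{a∈A} π'(s,a) · A_π(s,a). -/
open Finset

/-- A finite Markov decision process with bounded rewards and discount `γ ∈ (0,1)`. -/
structure FiniteMDP (S A : Type) [Fintype S] [Fintype A] : Type where
  P : S → A → S → ℝ
  r : S → A → ℝ
  γ : ℝ
  s0 : S
  P_nonneg : ∀ s a s', 0 ≤ P s a s'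
  P_sum_one : ∀ s a, ∑ s', P s a s' = 1
  r_bound : ∀ s a, |r s a| ≤ 1
  γ_pos : 0 < γ
  γ_lt_one : γ < 1

variable {S A : Type} [Fintype S] [Fintype A] [DecidableEq S]

/-- `π` is a (stochastic) policy. -/
def IsPolicy (π : S → A → ℝ) : Prop :=
  (∀ s a, 0 ≤ π s a) ∧ ∀ s, ∑ a, π s a = 1

/-- `Q` satisfies the Bellman equation of policy `π`. -/
def IsQ (M : FiniteMDP S A) (π Q : S → A → ℝ) : Prop :=
  ∀ s a, Q s a = M.r s a + M.γ * ∑ s', M.P s a s' * ∑ a', π s' a' * Q s' a'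

/-- `d` is the discounted state (occupancy) distribution of policy `π`. -/
def IsD (M : FiniteMDP S A) (π : S → A → ℝ) (d : S → ℝ) : Prop :=
  ∀ s', d s' = (1 - M.γ) * (if s' = M.s0 then (1 : ℝ) else 0)
      + M.γ * ∑ s, d s * ∑ a, π s a * M.P s a s'

/-- The normalized return `J^π = ∑_s d^π(s) ∑_a π(s,a) r(s,a)`. -/
def Jret (M : FiniteMDP S A) (π : S → A → ℝ) (d : S → ℝ) : ℝ :=
  ∑ s, d s * ∑ a, π s a * M.r s a

/-- The policy advantage function `A^{π'}_π(s) = ∑_a (π'(s,a) − π(s,a)) Q_π(s,a)`. -/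
def polAdv (π' π Q : S → A → ℝ) (s : S) : ℝ :=
  ∑ a, (π' s a - π s a) * Q s a

/-- The expected policy advantage `A^{π'}_{π,d}`. -/
def expPolAdv (π' π Q : S → A → ℝ) (d : S → ℝ) : ℝ :=
  ∑ s, d s * polAdv π' π Q s

/-- `δ(π',π) = max_s ∑_a |π'(s,a) − π(s,a)|`. -/
noncomputable def polDist (π' π : S → A → ℝ) : ℝ :=
  ⨆ s : S, ∑ a, |π' s a - π s a|

/-- `ΔA^{π'}_π = max_{s,s'} |A^{π'}_π(s) − A^{π'}_π(s')|`. -/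
noncomputable def advRange (π' π Q : S → A → ℝ) : ℝ :=
  ⨆ p : S × S, |polAdv π' π Q p.1 - polAdv π' π Q p.2|

/-- Kullback–Leibler divergence between probability vectors on a finite set. -/
noncomputable def KLdiv {B : Type} [Fintype B] (p q : B → ℝ) : ℝ :=
  ∑ a ∈ Finset.univ.filter (fun a => 0 < p a), p a * Real.log (p a / q a)

lemma pdl_key (M : FiniteMDP S A) (π ρ Q : S → A → ℝ) (dρ : S → ℝ)
    (hρ : IsPolicy ρ) (hQ : IsQ M π Q) (hd : IsD M ρ dρ) :
    ∑ s, dρ s * ∑ a, ρ s a * (Q s a - ∑ b, π s b * Q s b)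
      = Jret M ρ dρ - (1 - M.γ) * ∑ b, π M.s0 b * Q M.s0 b := by
  classical
  set V : S → ℝ := fun s => ∑ b, π s b * Q s b with hVdef
  have hinner : ∀ s, ∑ a, ρ s a * (Q s a - V s)
      = (∑ a, ρ s a * M.r s a)
        + M.γ * (∑ s', (∑ a, ρ s a * M.P s a s') * V s') - V s := by
    intro s
    have h2 : ∑ a, ρ s a * V s = V s := by
      rw [← Finset.sum_mul, hρ.2 s, one_mul]
    calc ∑ a, ρ s a * (Q s a - V s)
        = (∑ a, ρ s a * Q s a) - ∑ a, ρ s a * V s := by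
          simp [mul_sub, Finset.sum_sub_distrib]
      _ = (∑ a, ρ s a * Q s a) - V s := by rw [h2]
      _ = _ := by
          congr 1
          calc ∑ a, ρ s a * Q s a
              = ∑ a, (ρ s a * M.r s a
                  + M.γ * ∑ s', (ρ s a * M.P s a s') * V s') := by
                refine Finset.sum_congr rfl fun a _ => ?_
                rw [hQ s a, mul_add]
                congr 1
                simp only [hVdef, Finset.mul_sum]
                exact Finset.sum_congr rfl fun s' _ =>
                  Finset.sum_congr rfl fun b _ => by ring
            _ = (∑ a, ρ s a * M.r s a)
                + M.γ * ∑ s', (∑ a, ρ s a * M.P s a s') * V s' := by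
                rw [Finset.sum_add_distrib]
                congr 1
                calc ∑ a, M.γ * ∑ s', (ρ s a * M.P s a s') * V s'
                    = ∑ a, ∑ s', M.γ * ((ρ s a * M.P s a s') * V s') := by
                      exact Finset.sum_congr rfl fun a _ => Finset.mul_sum _ _ _
                  _ = ∑ s', ∑ a, M.γ * ((ρ s a * M.P s a s') * V s') :=
                      Finset.sum_comm
                  _ = ∑ s', (∑ a, ρ s a * M.P s a s') * V s' * M.γ := by
                      refine Finset.sum_congr rfl fun s' _ => ?_
                      simp only [Finset.sum_mul]
                      exact Finset.sum_congr rfl fun a _ => by ring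
                  _ = M.γ * ∑ s', (∑ a, ρ s a * M.P s a s') * V s' := by
                      rw [← Finset.sum_mul]; ring
  calc ∑ s, dρ s * ∑ a, ρ s a * (Q s a - V s)
      = ∑ s, (dρ s * ∑ a, ρ s a * M.r s a
          + dρ s * (M.γ * (∑ s', (∑ a, ρ s a * M.P s a s') * V s'))
          - dρ s * V s) := by
        refine Finset.sum_congr rfl fun s _ => ?_
        rw [hinner s]; ring
    _ = Jret M ρ dρ
        + (∑ s', (M.γ * ∑ s, dρ s * ∑ a, ρ s a * M.P s a s') * V s')
        - ∑ s, dρ s * V s := by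
        rw [Finset.sum_sub_distrib, Finset.sum_add_distrib]
        congr 2
        calc ∑ s, dρ s * (M.γ * ∑ s', (∑ a, ρ s a * M.P s a s') * V s')
            = ∑ s, ∑ s', M.γ * (dρ s * (∑ a, ρ s a * M.P s a s') * V s') := by
              refine Finset.sum_congr rfl fun s _ => ?_
              rw [Finset.mul_sum, Finset.mul_sum]
              exact Finset.sum_congr rfl fun s' _ => by ring
          _ = ∑ s', ∑ s, M.γ * (dρ s * (∑ a, ρ s a * M.P s a s') * V s') :=
              Finset.sum_comm
          _ = ∑ s', (M.γ * ∑ s, dρ s * ∑ a, ρ s a * M.P s a s') * V s' := by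
              refine Finset.sum_congr rfl fun s' _ => ?_
              simp only [Finset.sum_mul, Finset.mul_sum]
              exact Finset.sum_congr rfl fun s _ =>
                Finset.sum_congr rfl fun a _ => by ring
    _ = Jret M ρ dρ
        + (∑ s', (dρ s' - (1 - M.γ) * (if s' = M.s0 then (1:ℝ) else 0)) * V s')
        - ∑ s, dρ s * V s := by
        congr 2
        refine Finset.sum_congr rfl fun s' _ => ?_
        congr 1
        have := hd s'
        linarith
    _ = Jret M ρ dρ - (1 - M.γ) * V M.s0 := by
        have hs : ∑ s', (dρ s' - (1 - M.γ) * (if s' = M.s0 then (1:ℝ) else 0)) * V s'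
            = (∑ s', dρ s' * V s') - (1 - M.γ) * V M.s0 := by
          simp [sub_mul, ite_mul, mul_ite, Finset.sum_sub_distrib]
        rw [hs]; ring

/-- **Performance difference lemma** (Lemma 1). -/
theorem performance_difference_lemma
    {S A : Type} [Fintype S] [Fintype A] [DecidableEq S] [Nonempty S] [Nonempty A]
    (M : FiniteMDP S A) (π' π Q : S → A → ℝ) (d' d : S → ℝ)
    (hπ' : IsPolicy π') (hπ : IsPolicy π)
    (hQ : IsQ M π Q) (hd' : IsD M π' d') (hd : IsD M π d) :
    Jret M π' d' - Jret M π d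
      = ∑ s, d' s * ∑ a, π' s a * (Q s a - ∑ b, π s b * Q s b) := by
  have h1 := pdl_key M π π' Q d' hπ' hQ hd'
  have h2 := pdl_key M π π Q d hπ hQ hd
  have h3 : ∑ s, d s * ∑ a, π s a * (Q s a - ∑ b, π s b * Q s b) = 0 := by
    have h4 : ∀ s, ∑ a, π s a * (Q s a - ∑ b, π s b * Q s b) = 0 := by
      intro s
      simp [mul_sub, Finset.sum_sub_distrib, ← Finset.sum_mul, hπ.2 s]
    simp [h4]
  linarith [h1, h2, h3]
end

section
/- Policy improvement lower bound with penalty term (Eq. (6) in the proof of Lemma 2): For any two policies π' and π of a finite MDP, J^{π'} − J^{π} ≥ A^{π'}_{π,d^π} − (γ/(2(1−γ)²)) · δ(π',π) · ΔA^{π'}_π. -/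
open Finset

variable {S A : Type} [Fintype S] [Fintype A] [DecidableEq S]

section Aux

variable {S A : Type} [Fintype S] [Fintype A] [DecidableEq S]

lemma swap_P_sum (M : FiniteMDP S A) (x : S → ℝ) (y : S → A → ℝ) :
    ∑ s' : S, ∑ s : S, x s * ∑ a, y s a * M.P s a s' = ∑ s, x s * ∑ a, y s a := by
  rw [Finset.sum_comm]
  refine Finset.sum_congr rfl fun s _ => ?_
  rw [← Finset.mul_sum]
  congr 1
  rw [Finset.sum_comm]
  refine Finset.sum_congr rfl fun a _ => ?_
  rw [← Finset.mul_sum, M.P_sum_one, mul_one]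

lemma sum_d_eq_one (M : FiniteMDP S A) (ρ : S → A → ℝ) (e : S → ℝ)
    (hρ : IsPolicy ρ) (he : IsD M ρ e) : ∑ s, e s = 1 := by
  have h : ∑ s', e s' = (1 - M.γ) * 1 + M.γ * ∑ s, e s := by
    calc ∑ s', e s' = ∑ s', ((1 - M.γ) * (if s' = M.s0 then (1:ℝ) else 0)
          + M.γ * ∑ s, e s * ∑ a, ρ s a * M.P s a s') :=
        Finset.sum_congr rfl fun s' _ => he s'
      _ = (1 - M.γ) * ∑ s', (if s' = M.s0 then (1:ℝ) else 0)
          + M.γ * ∑ s', ∑ s, e s * ∑ a, ρ s a * M.P s a s' := by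
        rw [Finset.sum_add_distrib, ← Finset.mul_sum, ← Finset.mul_sum]
      _ = (1 - M.γ) * 1 + M.γ * ∑ s, e s := by
        rw [swap_P_sum]
        simp [hρ.2]
  have hγ : (1 - M.γ) ≠ 0 := by have := M.γ_lt_one; linarith
  have h2 : (1 - M.γ) * (∑ s, e s) = (1 - M.γ) * 1 := by linarith
  simpa using mul_left_cancel₀ hγ h2

lemma sum_abs_d_le_one (M : FiniteMDP S A) (ρ : S → A → ℝ) (e : S → ℝ)
    (hρ : IsPolicy ρ) (he : IsD M ρ e) : ∑ s, |e s| ≤ 1 := by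
  have key : ∀ s', |e s'| ≤ (1 - M.γ) * (if s' = M.s0 then (1:ℝ) else 0)
      + M.γ * ∑ s, |e s| * ∑ a, ρ s a * M.P s a s' := by
    intro s'
    rw [he s']
    refine (abs_add_le _ _).trans (add_le_add ?_ ?_)
    · rw [abs_mul]
      have h1 : |1 - M.γ| = 1 - M.γ := abs_of_nonneg (by have := M.γ_lt_one; linarith)
      have h2 : |(if s' = M.s0 then (1:ℝ) else 0)| = (if s' = M.s0 then (1:ℝ) else 0) := by
        split <;> simp
      rw [h1, h2]
    · rw [abs_mul, abs_of_nonneg M.γ_pos.le]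
      refine mul_le_mul_of_nonneg_left ?_ M.γ_pos.le
      refine (Finset.abs_sum_le_sum_abs _ _).trans (Finset.sum_le_sum fun s _ => ?_)
      rw [abs_mul, abs_of_nonneg
        (Finset.sum_nonneg fun a _ => mul_nonneg (hρ.1 s a) (M.P_nonneg s a s'))]
  have h : ∑ s, |e s| ≤ (1 - M.γ) * 1 + M.γ * ∑ s, |e s| := by
    calc ∑ s', |e s'| ≤ ∑ s', ((1 - M.γ) * (if s' = M.s0 then (1:ℝ) else 0)
          + M.γ * ∑ s, |e s| * ∑ a, ρ s a * M.P s a s') :=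
        Finset.sum_le_sum fun s' _ => key s'
      _ = (1 - M.γ) * ∑ s', (if s' = M.s0 then (1:ℝ) else 0)
          + M.γ * ∑ s', ∑ s, |e s| * ∑ a, ρ s a * M.P s a s' := by
        rw [Finset.sum_add_distrib, ← Finset.mul_sum, ← Finset.mul_sum]
      _ = (1 - M.γ) * 1 + M.γ * ∑ s, |e s| := by
        rw [swap_P_sum]
        simp [hρ.2]
  have hγ : 0 < 1 - M.γ := by have := M.γ_lt_one; linarith
  nlinarith

def Vf (π Q : S → A → ℝ) (s : S) : ℝ := ∑ a', π s a' * Q s a'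

lemma Jret_eq (M : FiniteMDP S A) (π Q ρ : S → A → ℝ) (e : S → ℝ)
    (hQ : IsQ M π Q) (he : IsD M ρ e) :
    Jret M ρ e = (∑ s, e s * (∑ a, ρ s a * Q s a - Vf π Q s))
      + (1 - M.γ) * Vf π Q M.s0 := by
  have hr : ∀ s a, M.r s a = Q s a - M.γ * ∑ s', M.P s a s' * Vf π Q s' := by
    intro s a
    rw [hQ s a]
    unfold Vf
    ring
  have h1 : Jret M ρ e = ∑ s, e s * ∑ a, ρ s a * Q s a
      - M.γ * ∑ s, e s * ∑ a, ρ s a * ∑ s', M.P s a s' * Vf π Q s' := by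
    unfold Jret
    rw [Finset.mul_sum, ← Finset.sum_sub_distrib]
    refine Finset.sum_congr rfl fun s _ => ?_
    have hinner : ∑ a, ρ s a * M.r s a = ∑ a, ρ s a * Q s a
        - M.γ * ∑ a, ρ s a * ∑ s', M.P s a s' * Vf π Q s' := by
      rw [Finset.mul_sum, ← Finset.sum_sub_distrib]
      refine Finset.sum_congr rfl fun a _ => ?_
      rw [hr s a]
      ring
    rw [hinner]
    ring
  have hX : ∑ s, e s * ∑ a, ρ s a * ∑ s', M.P s a s' * Vf π Q s'
      = ∑ s', (∑ s, e s * ∑ a, ρ s a * M.P s a s') * Vf π Q s' := by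
    calc ∑ s, e s * ∑ a, ρ s a * ∑ s', M.P s a s' * Vf π Q s'
        = ∑ s, ∑ a, ∑ s', e s * (ρ s a * (M.P s a s' * Vf π Q s')) := by
          refine Finset.sum_congr rfl fun s _ => ?_
          rw [Finset.mul_sum]
          refine Finset.sum_congr rfl fun a _ => ?_
          rw [Finset.mul_sum, Finset.mul_sum]
      _ = ∑ s, ∑ s', ∑ a, e s * (ρ s a * (M.P s a s' * Vf π Q s')) :=
          Finset.sum_congr rfl fun s _ => Finset.sum_comm
      _ = ∑ s', ∑ s, ∑ a, e s * (ρ s a * (M.P s a s' * Vf π Q s')) := Finset.sum_comm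
      _ = ∑ s', (∑ s, e s * ∑ a, ρ s a * M.P s a s') * Vf π Q s' := by
          refine Finset.sum_congr rfl fun s' _ => ?_
          rw [Finset.sum_mul]
          refine Finset.sum_congr rfl fun s _ => ?_
          rw [Finset.mul_sum, Finset.sum_mul]
          exact Finset.sum_congr rfl fun a _ => by ring
  have h2 : M.γ * (∑ s, e s * ∑ a, ρ s a * ∑ s', M.P s a s' * Vf π Q s')
      = ∑ s, e s * Vf π Q s - (1 - M.γ) * Vf π Q M.s0 := by
    rw [hX, Finset.mul_sum]
    have hterm : ∀ s', M.γ * ((∑ s, e s * ∑ a, ρ s a * M.P s a s') * Vf π Q s')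
        = (e s' - (1 - M.γ) * (if s' = M.s0 then (1:ℝ) else 0)) * Vf π Q s' := by
      intro s'
      have hc : M.γ * (∑ s, e s * ∑ a, ρ s a * M.P s a s')
          = e s' - (1 - M.γ) * (if s' = M.s0 then (1:ℝ) else 0) := by
        have h := he s'
        linarith
      rw [← mul_assoc, hc]
    rw [Finset.sum_congr rfl fun s' _ => hterm s']
    simp_rw [sub_mul, Finset.sum_sub_distrib]
    congr 1
    rw [Finset.sum_eq_single M.s0]
    · simp
    · intro b _ hb
      simp [hb]
    · intro h
      exact absurd (Finset.mem_univ _) h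
  rw [h1, h2]
  simp_rw [mul_sub, Finset.sum_sub_distrib]
  ring

lemma l1_bound [Nonempty S] (M : FiniteMDP S A) (π' π : S → A → ℝ) (d' d : S → ℝ)
    (hπ' : IsPolicy π') (hπ : IsPolicy π) (hd' : IsD M π' d') (hd : IsD M π d) :
    (1 - M.γ) * ∑ s, |d' s - d s| ≤ M.γ * polDist π' π := by
  have hδ : ∀ s, ∑ a, |π' s a - π s a| ≤ polDist π' π := fun s =>
    le_ciSup (f := fun s : S => ∑ a, |π' s a - π s a|)
      (Set.Finite.bddAbove (Set.finite_range _)) s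
  have hδ0 : 0 ≤ polDist π' π :=
    le_trans (Finset.sum_nonneg fun a _ => abs_nonneg _) (hδ (Classical.arbitrary S))
  have habsd : ∑ s, |d s| ≤ 1 := sum_abs_d_le_one M π d hπ hd
  have step : ∀ s', |d' s' - d s'| ≤ M.γ * ∑ s, (|d' s - d s| * ∑ a, π' s a * M.P s a s'
      + |d s| * ∑ a, |π' s a - π s a| * M.P s a s') := by
    intro s'
    have heq : d' s' - d s' = M.γ * ∑ s, ((d' s - d s) * ∑ a, π' s a * M.P s a s'
        + d s * ∑ a, (π' s a - π s a) * M.P s a s') := by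
      rw [hd' s', hd s']
      have hsum : ∑ s, ((d' s - d s) * ∑ a, π' s a * M.P s a s'
          + d s * ∑ a, (π' s a - π s a) * M.P s a s')
          = ∑ s, d' s * ∑ a, π' s a * M.P s a s' - ∑ s, d s * ∑ a, π s a * M.P s a s' := by
        rw [← Finset.sum_sub_distrib]
        refine Finset.sum_congr rfl fun s _ => ?_
        have hY : ∑ a, (π' s a - π s a) * M.P s a s'
            = ∑ a, π' s a * M.P s a s' - ∑ a, π s a * M.P s a s' := by
          rw [← Finset.sum_sub_distrib]
          exact Finset.sum_congr rfl fun a _ => sub_mul _ _ _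
        rw [hY]
        ring
      rw [hsum]
      ring
    rw [heq, abs_mul, abs_of_nonneg M.γ_pos.le]
    refine mul_le_mul_of_nonneg_left
      ((Finset.abs_sum_le_sum_abs _ _).trans (Finset.sum_le_sum fun s _ => ?_)) M.γ_pos.le
    refine (abs_add_le _ _).trans (add_le_add ?_ ?_)
    · rw [abs_mul, abs_of_nonneg
        (Finset.sum_nonneg fun a _ => mul_nonneg (hπ'.1 s a) (M.P_nonneg s a s'))]
    · rw [abs_mul]
      refine mul_le_mul_of_nonneg_left ?_ (abs_nonneg _)
      refine (Finset.abs_sum_le_sum_abs _ _).trans (Finset.sum_le_sum fun a _ => ?_)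
      rw [abs_mul, abs_of_nonneg (M.P_nonneg s a s')]
  have hsum : ∑ s', |d' s' - d s'| ≤ M.γ * (∑ s, |d' s - d s| + polDist π' π) := by
    calc ∑ s', |d' s' - d s'|
        ≤ ∑ s', M.γ * ∑ s, (|d' s - d s| * ∑ a, π' s a * M.P s a s'
            + |d s| * ∑ a, |π' s a - π s a| * M.P s a s') :=
          Finset.sum_le_sum fun s' _ => step s'
      _ = M.γ * (∑ s', ∑ s, |d' s - d s| * ∑ a, π' s a * M.P s a s'
            + ∑ s', ∑ s, |d s| * ∑ a, |π' s a - π s a| * M.P s a s') := by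
          rw [← Finset.mul_sum]
          congr 1
          rw [← Finset.sum_add_distrib]
          exact Finset.sum_congr rfl fun s' _ => Finset.sum_add_distrib
      _ = M.γ * (∑ s, |d' s - d s| * ∑ a, π' s a
            + ∑ s, |d s| * ∑ a, |π' s a - π s a|) := by
          rw [swap_P_sum M (fun s => |d' s - d s|) π',
            swap_P_sum M (fun s => |d s|) (fun s a => |π' s a - π s a|)]
      _ ≤ M.γ * (∑ s, |d' s - d s| + polDist π' π) := by
          refine mul_le_mul_of_nonneg_left (add_le_add ?_ ?_) M.γ_pos.le
          · refine le_of_eq (Finset.sum_congr rfl fun s _ => ?_)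
            rw [hπ'.2 s, mul_one]
          · calc ∑ s, |d s| * ∑ a, |π' s a - π s a|
                ≤ ∑ s, |d s| * polDist π' π :=
                  Finset.sum_le_sum fun s _ =>
                    mul_le_mul_of_nonneg_left (hδ s) (abs_nonneg _)
              _ = (∑ s, |d s|) * polDist π' π := by rw [Finset.sum_mul]
              _ ≤ 1 * polDist π' π := mul_le_mul_of_nonneg_right habsd hδ0
              _ = polDist π' π := one_mul _
  nlinarith [M.γ_pos]

end Aux

/-- **Policy improvement lower bound with penalty term** (Eq. (6)):
`J^{π'} − J^{π} ≥ A^{π'}_{π,d^π} − (γ/(2(1−γ)²))·δ(π',π)·ΔA^{π'}_π`. -/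
theorem improvement_lower_bound_with_penalty
    {S A : Type} [Fintype S] [Fintype A] [DecidableEq S] [Nonempty S] [Nonempty A]
    (M : FiniteMDP S A) (π' π Q : S → A → ℝ) (d' d : S → ℝ)
    (hπ' : IsPolicy π') (hπ : IsPolicy π)
    (hQ : IsQ M π Q) (hd' : IsD M π' d') (hd : IsD M π d) :
    Jret M π' d' - Jret M π d ≥
      expPolAdv π' π Q d
        - (M.γ / (2 * (1 - M.γ) ^ 2)) * polDist π' π * advRange π' π Q := by
  have hγ1 : 0 < 1 - M.γ := by have := M.γ_lt_one; linarith
  set f := polAdv π' π Q with hf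
  have hpol : ∀ s, ∑ a, π' s a * Q s a - Vf π Q s = f s := by
    intro s
    simp [hf, polAdv, Vf, sub_mul, Finset.sum_sub_distrib]
  have hJ' : Jret M π' d' = ∑ s, d' s * f s
      + (1 - M.γ) * Vf π Q M.s0 := by
    rw [Jret_eq M π Q π' d' hQ hd']
    congr 1
    exact Finset.sum_congr rfl fun s _ => by rw [hpol s]
  have hJ : Jret M π d = (1 - M.γ) * Vf π Q M.s0 := by
    rw [Jret_eq M π Q π d hQ hd]
    simp [Vf]
  have hdiff : Jret M π' d' - Jret M π d = expPolAdv π' π Q d + ∑ s, (d' s - d s) * f s := by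
    rw [hJ', hJ]
    unfold expPolAdv
    simp_rw [sub_mul]
    rw [Finset.sum_sub_distrib]
    ring
  have hR : ∀ s t : S, |f s - f t| ≤ advRange π' π Q := fun s t =>
    le_ciSup (f := fun p : S × S => |polAdv π' π Q p.1 - polAdv π' π Q p.2|)
      (Set.Finite.bddAbove (Set.finite_range _)) (s, t)
  have hR0 : 0 ≤ advRange π' π Q :=
    le_trans (abs_nonneg _) (hR (Classical.arbitrary S) (Classical.arbitrary S))
  have hδ : ∀ s, ∑ a, |π' s a - π s a| ≤ polDist π' π := fun s =>
    le_ciSup (f := fun s : S => ∑ a, |π' s a - π s a|)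
      (Set.Finite.bddAbove (Set.finite_range _)) s
  have hδ0 : 0 ≤ polDist π' π :=
    le_trans (Finset.sum_nonneg fun a _ => abs_nonneg _) (hδ (Classical.arbitrary S))
  obtain ⟨sM, -, hsM⟩ := Finset.exists_max_image (Finset.univ : Finset S) f
    ⟨Classical.arbitrary S, Finset.mem_univ _⟩
  obtain ⟨sm, -, hsm⟩ := Finset.exists_min_image (Finset.univ : Finset S) f
    ⟨Classical.arbitrary S, Finset.mem_univ _⟩
  have hfc : ∀ s, |f s - (f sM + f sm) / 2| ≤ advRange π' π Q / 2 := by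
    intro s
    have h1 : f s ≤ f sM := hsM s (Finset.mem_univ s)
    have h2 : f sm ≤ f s := hsm s (Finset.mem_univ s)
    have h3 : f sM - f sm ≤ advRange π' π Q := (le_abs_self _).trans (hR sM sm)
    rw [abs_le]
    constructor <;> linarith
  have hsum1 : ∑ s, (d' s - d s) = 0 := by
    rw [Finset.sum_sub_distrib, sum_d_eq_one M π' d' hπ' hd', sum_d_eq_one M π d hπ hd]
    ring
  have hcenter : ∑ s, (d' s - d s) * f s
      = ∑ s, (d' s - d s) * (f s - (f sM + f sm) / 2) := by
    simp_rw [mul_sub]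
    rw [Finset.sum_sub_distrib, ← Finset.sum_mul, hsum1]
    ring
  have hbound : |∑ s, (d' s - d s) * f s|
      ≤ (∑ s, |d' s - d s|) * (advRange π' π Q / 2) := by
    rw [hcenter]
    refine (Finset.abs_sum_le_sum_abs _ _).trans ?_
    rw [Finset.sum_mul]
    refine Finset.sum_le_sum fun s _ => ?_
    rw [abs_mul]
    exact mul_le_mul_of_nonneg_left (hfc s) (abs_nonneg _)
  have hT := l1_bound M π' π d' d hπ' hπ hd' hd
  have hT0 : 0 ≤ ∑ s, |d' s - d s| := Finset.sum_nonneg fun s _ => abs_nonneg _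
  have key : (∑ s, |d' s - d s|) * (advRange π' π Q / 2)
      ≤ M.γ / (2 * (1 - M.γ) ^ 2) * polDist π' π * advRange π' π Q := by
    rw [div_mul_eq_mul_div, div_mul_eq_mul_div, le_div_iff₀ (by positivity)]
    have h1 : ((1 - M.γ) * ∑ s, |d' s - d s|) * advRange π' π Q
        ≤ (M.γ * polDist π' π) * advRange π' π Q :=
      mul_le_mul_of_nonneg_right hT hR0
    nlinarith [mul_le_mul_of_nonneg_left h1 hγ1.le,
      mul_nonneg (mul_nonneg (mul_nonneg M.γ_pos.le M.γ_pos.le) hδ0) hR0,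
      M.γ_lt_one, M.γ_pos]
  rw [ge_iff_le, hdiff]
  linarith [neg_abs_le (∑ s, (d' s - d s) * f s), hbound, key]
end

section
/- Quadratic lower bound for interpolated policies (Eq. (A.5)): Let π̃ and π be policies of a finite MDP and ζ ∈ [0,1], and define the interpolated policy π'(s,a) = ζ·π̃(s,a) + (1−ζ)·π(s,a). Then J^{π'} − J^{π} ≥ ζ·A^{π̃}_{π,d^π} − (γ·ζ²/(2(1−γ)²)) · δ(π̃,π) · ΔA^{π̃}_π. -/
open Finset

variable {S A : Type} [Fintype S] [Fintype A] [DecidableEq S]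

/-! By the performance difference lemma, `J^{π'} − J^π = ζ ∑_s d^{π'}(s) A^{π̃}_π(s)`. Replacing
`d^{π'}` by `d^π` costs `ζ ∑_s (d^{π'} − d^π)(s) A^{π̃}_π(s)`; since `d^{π'} − d^π` has total mass
zero, this pairing is at most `‖d^{π'} − d^π‖₁ · ΔA^{π̃}_π / 2`. Subtracting the two fixed-point
equations shows that `‖d^{π'} − d^π‖₁ ≤ γ ‖d^{π'} − d^π‖₁ + γ ζ δ(π̃,π)`, whence
`‖d^{π'} − d^π‖₁ ≤ γ ζ δ(π̃,π) / (1 − γ)`, and `1/(1 − γ) ≤ 1/(1 − γ)²`. -/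

section Policies

omit [Fintype S] [DecidableEq S]

theorem polAdv_self (π Q : S → A → ℝ) (s : S) : polAdv π π Q s = 0 := by
  simp [polAdv]

variable {πt π π' : S → A → ℝ} {ζ : ℝ}

theorem IsPolicy.interpolate (hπt : IsPolicy πt) (hπ : IsPolicy π) (hζ0 : 0 ≤ ζ) (hζ1 : ζ ≤ 1)
    (hmix : ∀ s a, π' s a = ζ * πt s a + (1 - ζ) * π s a) : IsPolicy π' := by
  refine ⟨fun s a => ?_, fun s => ?_⟩
  · rw [hmix]
    have := hπt.1 s a
    have := hπ.1 s a
    have : 0 ≤ 1 - ζ := sub_nonneg.2 hζ1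
    positivity
  · simp only [hmix, sum_add_distrib, ← mul_sum, hπt.2, hπ.2]
    ring

theorem polAdv_eq_mul_of_interpolate (hmix : ∀ s a, π' s a = ζ * πt s a + (1 - ζ) * π s a)
    (Q : S → A → ℝ) (s : S) : polAdv π' π Q s = ζ * polAdv πt π Q s := by
  simp only [polAdv, hmix, mul_sum]
  exact sum_congr rfl fun a _ => by ring

theorem sum_abs_sub_eq_mul_of_interpolate (hζ0 : 0 ≤ ζ)
    (hmix : ∀ s a, π' s a = ζ * πt s a + (1 - ζ) * π s a) (s : S) :
    ∑ a, |π' s a - π s a| = ζ * ∑ a, |πt s a - π s a| := by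
  simp only [hmix, mul_sum]
  refine sum_congr rfl fun a _ => ?_
  rw [← abs_of_nonneg hζ0, ← abs_mul, abs_of_nonneg hζ0]
  ring_nf

theorem polDist_nonneg (π' π : S → A → ℝ) : 0 ≤ polDist π' π :=
  Real.iSup_nonneg fun _ => sum_nonneg fun _ _ => abs_nonneg _

theorem advRange_nonneg (π' π Q : S → A → ℝ) : 0 ≤ advRange π' π Q :=
  Real.iSup_nonneg fun _ => abs_nonneg _

end Policies

section Kernel

omit [DecidableEq S]

def FiniteMDP.kernel (M : FiniteMDP S A) (ρ : S → A → ℝ) (s s' : S) : ℝ :=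
  ∑ a, ρ s a * M.P s a s'

variable (M : FiniteMDP S A)

theorem FiniteMDP.kernel_sub (ρ' ρ : S → A → ℝ) (s s' : S) :
    M.kernel (fun s a => ρ' s a - ρ s a) s s' = M.kernel ρ' s s' - M.kernel ρ s s' := by
  simp only [FiniteMDP.kernel, sub_mul, sum_sub_distrib]

theorem FiniteMDP.sum_abs_sum_mul_kernel_le (x : S → ℝ) (ρ : S → A → ℝ) :
    ∑ s', |∑ s, x s * M.kernel ρ s s'| ≤ ∑ s, |x s| * ∑ a, |ρ s a| :=
  calc ∑ s', |∑ s, x s * M.kernel ρ s s'|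
      ≤ ∑ s', ∑ s, ∑ a, |x s| * |ρ s a| * M.P s a s' := by
        gcongr with s'
        refine (abs_sum_le_sum_abs _ _).trans (sum_le_sum fun s _ => ?_)
        rw [FiniteMDP.kernel, mul_sum]
        refine (abs_sum_le_sum_abs _ _).trans_eq (sum_congr rfl fun a _ => ?_)
        rw [abs_mul, abs_mul, abs_of_nonneg (M.P_nonneg s a s'), mul_assoc]
    _ = ∑ s, |x s| * ∑ a, |ρ s a| := by
        rw [sum_comm]
        refine sum_congr rfl fun s _ => ?_
        rw [sum_comm, mul_sum]
        refine sum_congr rfl fun a _ => ?_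
        rw [← mul_sum, M.P_sum_one, mul_one]

theorem FiniteMDP.sum_abs_sum_mul_kernel_le_of_isPolicy {ρ : S → A → ℝ} (hρ : IsPolicy ρ)
    (x : S → ℝ) : ∑ s', |∑ s, x s * M.kernel ρ s s'| ≤ ∑ s, |x s| := by
  have hρ_abs (s : S) : ∑ a, |ρ s a| = 1 := by
    simp only [abs_of_nonneg (hρ.1 s _), hρ.2 s]
  simpa only [hρ_abs, mul_one] using M.sum_abs_sum_mul_kernel_le x ρ

end Kernel

section Occupancy

variable {M : FiniteMDP S A} {ρ ρ' : S → A → ℝ} {d d' : S → ℝ}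

theorem IsD.eq_kernel (hd : IsD M ρ d) (s' : S) :
    d s' = (1 - M.γ) * (if s' = M.s0 then (1 : ℝ) else 0)
      + M.γ * ∑ s, d s * M.kernel ρ s s' :=
  hd s'

theorem IsD.sum_mul_eq (hd : IsD M ρ d) (V : S → ℝ) :
    ∑ s', d s' * V s' = (1 - M.γ) * V M.s0 + M.γ * ∑ s, d s * ∑ s', M.kernel ρ s s' * V s' := by
  calc ∑ s', d s' * V s'
      = ∑ s', ((1 - M.γ) * (if s' = M.s0 then V s' else 0)
          + M.γ * ∑ s, d s * (M.kernel ρ s s' * V s')) :=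
        sum_congr rfl fun s' _ => by
          rw [hd.eq_kernel s', add_mul, mul_assoc, mul_assoc, sum_mul]
          simp only [ite_mul, one_mul, zero_mul, mul_assoc]
    _ = (1 - M.γ) * V M.s0 + M.γ * ∑ s, d s * ∑ s', M.kernel ρ s s' * V s' := by
        simp only [sum_add_distrib, ← mul_sum, sum_ite_eq', mem_univ, if_true]
        rw [sum_comm]
        simp only [mul_sum]

theorem IsD.sum_eq_one (hρ : ∀ s, ∑ a, ρ s a = 1) (hd : IsD M ρ d) : ∑ s, d s = 1 := by
  have hkernel (s : S) : ∑ s', M.kernel ρ s s' = 1 := by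
    unfold FiniteMDP.kernel
    rw [sum_comm]
    simp only [← mul_sum, M.P_sum_one, mul_one, hρ s]
  have hfix := hd.sum_mul_eq fun _ => 1
  simp only [mul_one, hkernel] at hfix
  nlinarith [M.γ_lt_one]

theorem IsD.sum_abs_le_one (hρ : IsPolicy ρ) (hd : IsD M ρ d) : ∑ s, |d s| ≤ 1 := by
  have hγ := M.γ_pos
  have hγ1 := M.γ_lt_one
  have hpointwise (s' : S) : |d s'| ≤ (1 - M.γ) * (if s' = M.s0 then (1 : ℝ) else 0)
      + M.γ * |∑ s, d s * M.kernel ρ s s'| := by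
    rw [hd.eq_kernel s']
    refine (abs_add_le _ _).trans_eq ?_
    rw [abs_mul, abs_mul, abs_of_pos hγ, abs_of_pos (sub_pos.2 hγ1)]
    split_ifs <;> simp
  have hcontract : ∑ s, |d s| ≤ (1 - M.γ) + M.γ * ∑ s, |d s| :=
    calc ∑ s, |d s|
        ≤ ∑ s', ((1 - M.γ) * (if s' = M.s0 then (1 : ℝ) else 0)
            + M.γ * |∑ s, d s * M.kernel ρ s s'|) := sum_le_sum fun s' _ => hpointwise s'
      _ = (1 - M.γ) + M.γ * ∑ s', |∑ s, d s * M.kernel ρ s s'| := by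
        simp [sum_add_distrib, mul_sum]
      _ ≤ (1 - M.γ) + M.γ * ∑ s, |d s| := by
        have := M.sum_abs_sum_mul_kernel_le_of_isPolicy hρ d
        gcongr
  nlinarith

theorem IsD.sum_abs_sub_le (hρ' : IsPolicy ρ') (hρ : IsPolicy ρ) (hd' : IsD M ρ' d')
    (hd : IsD M ρ d) {B : ℝ} (hB : ∀ s, ∑ a, |ρ' s a - ρ s a| ≤ B) :
    ∑ s, |d' s - d s| ≤ M.γ * B / (1 - M.γ) := by
  have hγ := M.γ_pos
  have hγ1 := M.γ_lt_one
  have hB0 : 0 ≤ B := (sum_nonneg fun a _ => abs_nonneg _).trans (hB M.s0)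
  have hdiff (s' : S) : d' s' - d s' = M.γ * (∑ s, (d' s - d s) * M.kernel ρ' s s'
      + ∑ s, d s * M.kernel (fun s a => ρ' s a - ρ s a) s s') := by
    simp only [hd'.eq_kernel s', hd.eq_kernel s', FiniteMDP.kernel_sub, sub_mul, mul_sub,
      sum_sub_distrib]
    ring
  have hcontract : ∑ s, |d' s - d s| ≤ M.γ * ∑ s, |d' s - d s| + M.γ * B :=
    calc ∑ s', |d' s' - d s'|
        ≤ ∑ s', M.γ * (|∑ s, (d' s - d s) * M.kernel ρ' s s'|
            + |∑ s, d s * M.kernel (fun s a => ρ' s a - ρ s a) s s'|) := by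
          gcongr with s'
          rw [hdiff s', abs_mul, abs_of_pos hγ]
          gcongr
          exact abs_add_le _ _
      _ ≤ M.γ * (∑ s, |d' s - d s| + ∑ s, |d s| * B) := by
          rw [← mul_sum, sum_add_distrib]
          refine mul_le_mul_of_nonneg_left (add_le_add ?_ ?_) hγ.le
          · exact M.sum_abs_sum_mul_kernel_le_of_isPolicy hρ' _
          · exact (M.sum_abs_sum_mul_kernel_le d _).trans
              (sum_le_sum fun s _ => mul_le_mul_of_nonneg_left (hB s) (abs_nonneg _))
      _ ≤ M.γ * ∑ s, |d' s - d s| + M.γ * B := by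
          rw [← sum_mul, mul_add]
          gcongr
          exact mul_le_of_le_one_left hB0 (hd.sum_abs_le_one hρ)
  rw [le_div_iff₀ (sub_pos.2 hγ1)]
  linarith

end Occupancy

section PerformanceDifference

variable {M : FiniteMDP S A} {π Q ρ : S → A → ℝ} {d dρ : S → ℝ}

theorem Jret_eq_expPolAdv_add (hQ : IsQ M π Q) (hd : IsD M ρ dρ) :
    Jret M ρ dρ = expPolAdv ρ π Q dρ + (1 - M.γ) * ∑ a, π M.s0 a * Q M.s0 a := by
  set V : S → ℝ := fun s => ∑ a, π s a * Q s a
  have hreward (s : S) : ∑ a, ρ s a * M.r s a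
      = ∑ a, ρ s a * Q s a - M.γ * ∑ s', M.kernel ρ s s' * V s' := by
    have hswap : ∑ s', M.kernel ρ s s' * V s' = ∑ a, ρ s a * ∑ s', M.P s a s' * V s' := by
      simp only [FiniteMDP.kernel, sum_mul, mul_sum, mul_assoc]
      exact sum_comm
    rw [hswap, mul_sum, ← sum_sub_distrib]
    exact sum_congr rfl fun a _ => by rw [hQ s a]; ring
  have hadv (s : S) : polAdv ρ π Q s = ∑ a, ρ s a * Q s a - V s := by
    simp only [polAdv, V, sub_mul, sum_sub_distrib]
  have hJ : Jret M ρ dρ = ∑ s, dρ s * ∑ a, ρ s a * Q s a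
      - M.γ * ∑ s, dρ s * ∑ s', M.kernel ρ s s' * V s' := by
    rw [Jret, mul_sum, ← sum_sub_distrib]
    exact sum_congr rfl fun s _ => by rw [hreward]; ring
  have hA : expPolAdv ρ π Q dρ = ∑ s, dρ s * ∑ a, ρ s a * Q s a - ∑ s, dρ s * V s := by
    rw [expPolAdv, ← sum_sub_distrib]
    exact sum_congr rfl fun s _ => by rw [hadv]; ring
  rw [hJ, hA]
  linarith [hd.sum_mul_eq V]

/-- The performance difference lemma of Kakade and Langford. -/
theorem Jret_sub_Jret_eq_expPolAdv (hQ : IsQ M π Q) (hdρ : IsD M ρ dρ) (hd : IsD M π d) :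
    Jret M ρ dρ - Jret M π d = expPolAdv ρ π Q dρ := by
  rw [Jret_eq_expPolAdv_add hQ hdρ, Jret_eq_expPolAdv_add hQ hd]
  simp [expPolAdv, polAdv_self]

end PerformanceDifference

section Suprema

omit [DecidableEq S]

theorem sum_abs_sub_le_polDist (π' π : S → A → ℝ) (s : S) :
    ∑ a, |π' s a - π s a| ≤ polDist π' π :=
  le_ciSup (f := fun s => ∑ a, |π' s a - π s a|) (Set.finite_range _).bddAbove s

theorem abs_polAdv_sub_le_advRange (π' π Q : S → A → ℝ) (s t : S) :
    |polAdv π' π Q s - polAdv π' π Q t| ≤ advRange π' π Q :=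
  le_ciSup (f := fun p : S × S => |polAdv π' π Q p.1 - polAdv π' π Q p.2|)
    (Set.finite_range _).bddAbove (s, t)

end Suprema

theorem abs_sum_mul_le_of_sum_eq_zero {ι : Type*} [Fintype ι] {e f : ι → ℝ}
    (he : ∑ i, e i = 0) {Δ : ℝ} (hf : ∀ i j, |f i - f j| ≤ Δ) :
    |∑ i, e i * f i| ≤ (∑ i, |e i|) * (Δ / 2) := by
  cases isEmpty_or_nonempty ι
  · simp
  obtain ⟨imax, -, himax⟩ := exists_max_image univ f univ_nonempty
  obtain ⟨imin, -, himin⟩ := exists_min_image univ f univ_nonempty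
  set c := (f imax + f imin) / 2 with hc
  have hfc (i : ι) : |f i - c| ≤ Δ / 2 := by
    have := himax i (mem_univ i)
    have := himin i (mem_univ i)
    have := abs_le.1 (hf imax imin)
    rw [abs_le]
    constructor <;> linarith [hc]
  have hcenter : ∑ i, e i * f i = ∑ i, e i * (f i - c) := by
    simp only [mul_sub, sum_sub_distrib, ← sum_mul, he, zero_mul, sub_zero]
  rw [hcenter, sum_mul]
  refine (abs_sum_le_sum_abs _ _).trans (sum_le_sum fun i _ => ?_)
  rw [abs_mul]
  exact mul_le_mul_of_nonneg_left (hfc i) (abs_nonneg _)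

theorem Jret_interpolate_sub_eq {M : FiniteMDP S A} {πt π π' Q : S → A → ℝ} {ζ : ℝ}
    {d' d : S → ℝ} (hmix : ∀ s a, π' s a = ζ * πt s a + (1 - ζ) * π s a) (hQ : IsQ M π Q)
    (hd' : IsD M π' d') (hd : IsD M π d) :
    Jret M π' d' - Jret M π d = ζ * expPolAdv πt π Q d' := by
  rw [Jret_sub_Jret_eq_expPolAdv hQ hd' hd, expPolAdv, expPolAdv, mul_sum]
  exact sum_congr rfl fun s _ => by rw [polAdv_eq_mul_of_interpolate hmix]; ring

omit [DecidableEq S] in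
theorem abs_expPolAdv_sub_le (ρ π Q : S → A → ℝ) {d' d : S → ℝ}
    (hmass : ∑ s, d' s = ∑ s, d s) :
    |expPolAdv ρ π Q d' - expPolAdv ρ π Q d|
      ≤ (∑ s, |d' s - d s|) * (advRange ρ π Q / 2) := by
  have hzero : ∑ s, (d' s - d s) = 0 := by rw [sum_sub_distrib, hmass, sub_self]
  rw [expPolAdv, expPolAdv, ← sum_sub_distrib]
  simp only [← sub_mul]
  exact abs_sum_mul_le_of_sum_eq_zero hzero (abs_polAdv_sub_le_advRange ρ π Q)

theorem interpolated_policy_quadratic_lower_bound_general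
    {S A : Type} [Fintype S] [Fintype A] [DecidableEq S]
    (M : FiniteMDP S A) (πt π Q : S → A → ℝ) (ζ : ℝ) (π' : S → A → ℝ) (d' d : S → ℝ)
    (hπt : IsPolicy πt) (hπ : IsPolicy π)
    (hζ0 : 0 ≤ ζ) (hζ1 : ζ ≤ 1)
    (hmix : ∀ s a, π' s a = ζ * πt s a + (1 - ζ) * π s a)
    (hQ : IsQ M π Q) (hd' : IsD M π' d') (hd : IsD M π d) :
    Jret M π' d' - Jret M π d ≥
      ζ * expPolAdv πt π Q d
        - (M.γ * ζ ^ 2 / (2 * (1 - M.γ) ^ 2)) * polDist πt π * advRange πt π Q := by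
  have hπ' := hπt.interpolate hπ hζ0 hζ1 hmix
  set δ := polDist πt π
  set Δ := advRange πt π Q
  have hδ : 0 ≤ δ := polDist_nonneg πt π
  have hΔ : 0 ≤ Δ := advRange_nonneg πt π Q
  have hdist : ∑ s, |d' s - d s| ≤ M.γ * (ζ * δ) / (1 - M.γ) :=
    hd'.sum_abs_sub_le hπ' hπ hd fun s => (sum_abs_sub_eq_mul_of_interpolate hζ0 hmix s).trans_le
      (mul_le_mul_of_nonneg_left (sum_abs_sub_le_polDist πt π s) hζ0)
  have hshift : |expPolAdv πt π Q d' - expPolAdv πt π Q d|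
      ≤ M.γ * (ζ * δ) / (1 - M.γ) * (Δ / 2) :=
    (abs_expPolAdv_sub_le πt π Q (by rw [hd'.sum_eq_one hπ'.2, hd.sum_eq_one hπ.2])).trans
      (by gcongr)
  have hconst : 0 ≤ M.γ * ζ ^ 2 / (2 * (1 - M.γ) ^ 2) * δ * Δ := by
    have := M.γ_pos
    positivity
  have herror : ζ * (M.γ * (ζ * δ) / (1 - M.γ) * (Δ / 2))
      ≤ M.γ * ζ ^ 2 / (2 * (1 - M.γ) ^ 2) * δ * Δ :=
    calc ζ * (M.γ * (ζ * δ) / (1 - M.γ) * (Δ / 2))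
        = M.γ * ζ ^ 2 / (2 * (1 - M.γ) ^ 2) * δ * Δ * (1 - M.γ) := by field_simp
      _ ≤ M.γ * ζ ^ 2 / (2 * (1 - M.γ) ^ 2) * δ * Δ :=
          mul_le_of_le_one_right hconst (by linarith [M.γ_pos])
  rw [Jret_interpolate_sub_eq hmix hQ hd' hd]
  nlinarith [neg_abs_le (expPolAdv πt π Q d' - expPolAdv πt π Q d)]

/-- **Quadratic lower bound for interpolated policies** (Eq. (A.5)):
with `π' = ζ·π̃ + (1−ζ)·π`,
`J^{π'} − J^{π} ≥ ζ·A^{π̃}_{π,d^π} − (γζ²/(2(1−γ)²))·δ(π̃,π)·ΔA^{π̃}_π`. -/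
theorem interpolated_policy_quadratic_lower_bound
    {S A : Type} [Fintype S] [Fintype A] [DecidableEq S] [Nonempty S] [Nonempty A]
    (M : FiniteMDP S A) (πt π Q : S → A → ℝ) (ζ : ℝ) (π' : S → A → ℝ) (d' d : S → ℝ)
    (hπt : IsPolicy πt) (hπ : IsPolicy π)
    (hζ0 : 0 ≤ ζ) (hζ1 : ζ ≤ 1)
    (hmix : ∀ s a, π' s a = ζ * πt s a + (1 - ζ) * π s a)
    (hQ : IsQ M π Q) (hd' : IsD M π' d') (hd : IsD M π d) :
    Jret M π' d' - Jret M π d ≥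
      ζ * expPolAdv πt π Q d
        - (M.γ * ζ ^ 2 / (2 * (1 - M.γ) ^ 2)) * polDist πt π * advRange πt π Q :=
  interpolated_policy_quadratic_lower_bound_general M πt π Q ζ π' d' d hπt hπ hζ0 hζ1 hmix hQ hd' hd
end

section
/- Safe policy improvement with optimal mixing coefficient (Lemma 2): Let π̃ and π be policies of a finite MDP. Assume A^{π̃}_{π,d^π} ≥ 0 and δ(π̃,π)·ΔA^{π̃}_π > 0, set ζ* = (1−γ)²·A^{π̃}_{π,d^π} / (γ·δ(π̃,π)·ΔA^{π̃}_π), and assume ζ* ≤ 1. Then the interpolated policy π'(s,a) = ζ*·π̃(s,a) + (1−ζ*)·π(s,a) satisfies J^{π'} − J^{π} ≥ ((1−γ)·A^{π̃}_{π,d^π})² / (2γ·δ(π̃,π)·ΔA^{π̃}_π). -/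
open Finset

variable {S A : Type} [Fintype S] [Fintype A] [DecidableEq S]

set_option linter.unusedSectionVars false
set_option linter.unusedVariables false

-- sum of kernel over next states is 1
lemma sum_K_eq_one (M : FiniteMDP S A) {π : S → A → ℝ} (hπ : IsPolicy π) (s : S) :
    ∑ s', ∑ a, π s a * M.P s a s' = 1 := by
  rw [Finset.sum_comm]
  calc ∑ a, ∑ s', π s a * M.P s a s' = ∑ a, π s a := by
        refine Finset.sum_congr rfl fun a _ => ?_
        rw [← Finset.mul_sum, M.P_sum_one, mul_one]
    _ = 1 := hπ.2 s

lemma isD_sum_eq_one (M : FiniteMDP S A) {π : S → A → ℝ} {d : S → ℝ}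
    (hπ : IsPolicy π) (hd : IsD M π d) : ∑ s, d s = 1 := by
  have h1 : ∑ s', d s' = (1 - M.γ) + M.γ * ∑ s, d s := by
    calc ∑ s', d s'
        = ∑ s', ((1 - M.γ) * (if s' = M.s0 then (1:ℝ) else 0)
            + M.γ * ∑ s, d s * ∑ a, π s a * M.P s a s') :=
          Finset.sum_congr rfl fun s' _ => hd s'
      _ = (1 - M.γ) * ∑ s', (if s' = M.s0 then (1:ℝ) else 0)
            + M.γ * ∑ s', ∑ s, d s * ∑ a, π s a * M.P s a s' := by
          rw [Finset.sum_add_distrib, Finset.mul_sum, Finset.mul_sum]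
      _ = (1 - M.γ) + M.γ * ∑ s, d s := by
          rw [Finset.sum_ite_eq' Finset.univ M.s0 (fun _ => (1:ℝ)),
            if_pos (Finset.mem_univ _), mul_one, Finset.sum_comm]
          congr 1
          · congr 1
            refine Finset.sum_congr rfl fun s _ => ?_
            rw [← Finset.mul_sum, sum_K_eq_one M hπ s, mul_one]
  have hγ : M.γ < 1 := M.γ_lt_one
  nlinarith [h1]

lemma isD_sum_abs_le_one (M : FiniteMDP S A) {π : S → A → ℝ} {d : S → ℝ}
    (hπ : IsPolicy π) (hd : IsD M π d) : ∑ s, |d s| ≤ 1 := by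
  have key : ∀ s', |d s'| ≤ (1 - M.γ) * (if s' = M.s0 then (1:ℝ) else 0)
      + M.γ * ∑ s, |d s| * ∑ a, π s a * M.P s a s' := by
    intro s'
    rw [hd s']
    refine (abs_add_le _ _).trans (add_le_add ?_ ?_)
    · rw [abs_mul]
      have h1 : |1 - M.γ| = 1 - M.γ := abs_of_nonneg (by linarith [M.γ_lt_one])
      have h2 : |if s' = M.s0 then (1:ℝ) else 0| = if s' = M.s0 then (1:ℝ) else 0 := by
        split <;> simp
      rw [h1, h2]
    · rw [abs_mul, abs_of_nonneg M.γ_pos.le]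
      refine mul_le_mul_of_nonneg_left ?_ M.γ_pos.le
      refine (Finset.abs_sum_le_sum_abs _ _).trans ?_
      refine Finset.sum_le_sum fun s _ => ?_
      rw [abs_mul]
      refine mul_le_mul_of_nonneg_left ?_ (abs_nonneg _)
      rw [abs_of_nonneg]
      exact Finset.sum_nonneg fun a _ => mul_nonneg (hπ.1 s a) (M.P_nonneg s a s')
  have h1 : ∑ s', |d s'| ≤ (1 - M.γ) + M.γ * ∑ s, |d s| := by
    calc ∑ s', |d s'| ≤ ∑ s', ((1 - M.γ) * (if s' = M.s0 then (1:ℝ) else 0)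
          + M.γ * ∑ s, |d s| * ∑ a, π s a * M.P s a s') :=
        Finset.sum_le_sum fun s' _ => key s'
      _ = (1 - M.γ) + M.γ * ∑ s, |d s| := by
        rw [Finset.sum_add_distrib, ← Finset.mul_sum, ← Finset.mul_sum,
          Finset.sum_ite_eq' Finset.univ M.s0 (fun _ => (1:ℝ)),
          if_pos (Finset.mem_univ _), mul_one, Finset.sum_comm]
        congr 2
        refine Finset.sum_congr rfl fun s _ => ?_
        rw [← Finset.mul_sum, sum_K_eq_one M hπ s, mul_one]
  nlinarith [M.γ_lt_one, M.γ_pos]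

-- performance formula
lemma jret_formula (M : FiniteMDP S A) (ρ π Q : S → A → ℝ) (e : S → ℝ)
    (hQ : IsQ M π Q) (he : IsD M ρ e) :
    Jret M ρ e = ∑ s, e s * (∑ a, ρ s a * Q s a - ∑ a, π s a * Q s a)
      + (1 - M.γ) * ∑ a, π M.s0 a * Q M.s0 a := by
  set V : S → ℝ := fun s => ∑ a', π s a' * Q s a' with hV
  have hr : ∀ s a, M.r s a = Q s a - M.γ * ∑ s', M.P s a s' * V s' := by
    intro s a; have := hQ s a; simp only [hV]; linarith
  have step1 : Jret M ρ e = ∑ s, e s * ∑ a, ρ s a * Q s a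
      - ∑ s, ∑ a, ∑ s', e s * ρ s a * (M.γ * M.P s a s' * V s') := by
    unfold Jret
    rw [← Finset.sum_sub_distrib]
    refine Finset.sum_congr rfl fun s _ => ?_
    have hin : ∑ a, ρ s a * M.r s a
        = ∑ a, ρ s a * Q s a - ∑ a, ∑ s', ρ s a * (M.γ * M.P s a s' * V s') := by
      rw [← Finset.sum_sub_distrib]
      refine Finset.sum_congr rfl fun a _ => ?_
      rw [hr s a, mul_sub]
      congr 1
      simp only [Finset.mul_sum]
      refine Finset.sum_congr rfl fun s' _ => ?_
      ring
    calc e s * ∑ a, ρ s a * M.r s a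
        = e s * ∑ a, ρ s a * Q s a
          - e s * ∑ a, ∑ s', ρ s a * (M.γ * M.P s a s' * V s') := by rw [hin]; ring
      _ = e s * ∑ a, ρ s a * Q s a
          - ∑ a, ∑ s', e s * ρ s a * (M.γ * M.P s a s' * V s') := by
          congr 1
          simp only [Finset.mul_sum]
          refine Finset.sum_congr rfl fun a _ => Finset.sum_congr rfl fun s' _ => ?_
          ring
  have inner : ∀ s', (M.γ * ∑ s, e s * ∑ a, ρ s a * M.P s a s') * V s'
      = ∑ s, ∑ a, e s * ρ s a * (M.γ * M.P s a s' * V s') := by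
    intro s'
    simp only [Finset.mul_sum, Finset.sum_mul]
    exact Finset.sum_congr rfl fun s _ => Finset.sum_congr rfl fun a _ => by ring
  have step2 : ∑ s, ∑ a, ∑ s', e s * ρ s a * (M.γ * M.P s a s' * V s')
      = ∑ s', (e s' - (1 - M.γ) * (if s' = M.s0 then (1:ℝ) else 0)) * V s' := by
    calc ∑ s, ∑ a, ∑ s', e s * ρ s a * (M.γ * M.P s a s' * V s')
        = ∑ s, ∑ s', ∑ a, e s * ρ s a * (M.γ * M.P s a s' * V s') :=
          Finset.sum_congr rfl fun s _ => Finset.sum_comm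
      _ = ∑ s', ∑ s, ∑ a, e s * ρ s a * (M.γ * M.P s a s' * V s') := Finset.sum_comm
      _ = ∑ s', (M.γ * ∑ s, e s * ∑ a, ρ s a * M.P s a s') * V s' :=
          Finset.sum_congr rfl fun s' _ => (inner s').symm
      _ = ∑ s', (e s' - (1 - M.γ) * (if s' = M.s0 then (1:ℝ) else 0)) * V s' := by
          refine Finset.sum_congr rfl fun s' _ => ?_
          congr 1
          have := he s'
          linarith
  have hsite : ∑ s', (1 - M.γ) * (if s' = M.s0 then (1:ℝ) else 0) * V s'
      = (1 - M.γ) * V M.s0 := by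
    calc ∑ s', (1 - M.γ) * (if s' = M.s0 then (1:ℝ) else 0) * V s'
        = ∑ s', (if s' = M.s0 then (1 - M.γ) * V s' else 0) :=
          Finset.sum_congr rfl fun s' _ => by split <;> simp
      _ = (1 - M.γ) * V M.s0 := by
          rw [Finset.sum_ite_eq' Finset.univ M.s0 (fun s' => (1 - M.γ) * V s')]
          simp
  rw [step1, step2]
  have h2 : ∑ s', (e s' - (1 - M.γ) * (if s' = M.s0 then (1:ℝ) else 0)) * V s'
      = ∑ s', e s' * V s' - (1 - M.γ) * V M.s0 := by
    rw [← hsite, ← Finset.sum_sub_distrib]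
    exact Finset.sum_congr rfl fun s' _ => by ring
  have h3 : ∑ s, e s * (∑ a, ρ s a * Q s a - ∑ a, π s a * Q s a)
      = ∑ s, e s * ∑ a, ρ s a * Q s a - ∑ s, e s * V s := by
    simp only [mul_sub]
    rw [Finset.sum_sub_distrib]
  rw [h2, h3]
  ring

-- occupancy difference bound
lemma occ_diff_bound (M : FiniteMDP S A) {π' π : S → A → ℝ} {d' d : S → ℝ}
    (hπ' : IsPolicy π') (hπ : IsPolicy π) (hd' : IsD M π' d') (hd : IsD M π d)
    {D : ℝ} (hD0 : 0 ≤ D) (hD : ∀ s, ∑ a, |π' s a - π s a| ≤ D) :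
    (1 - M.γ) * ∑ s, |d' s - d s| ≤ M.γ * D := by
  have key : ∀ s', |d' s' - d s'| ≤ M.γ * ∑ s,
      (|d' s - d s| * ∑ a, π' s a * M.P s a s'
        + |d s| * ∑ a, |π' s a - π s a| * M.P s a s') := by
    intro s'
    have hdiff : d' s' - d s' = M.γ * ∑ s, ((d' s - d s) * ∑ a, π' s a * M.P s a s'
        + d s * ∑ a, (π' s a - π s a) * M.P s a s') := by
      rw [hd' s', hd s']
      have h1 : ∑ s, ((d' s - d s) * ∑ a, π' s a * M.P s a s'
          + d s * ∑ a, (π' s a - π s a) * M.P s a s')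
          = ∑ s, d' s * ∑ a, π' s a * M.P s a s'
            - ∑ s, d s * ∑ a, π s a * M.P s a s' := by
        rw [← Finset.sum_sub_distrib]
        refine Finset.sum_congr rfl fun s _ => ?_
        have h2 : ∑ a, (π' s a - π s a) * M.P s a s'
            = (∑ a, π' s a * M.P s a s') - ∑ a, π s a * M.P s a s' := by
          rw [← Finset.sum_sub_distrib]
          exact Finset.sum_congr rfl fun a _ => by ring
        rw [h2]; ring
      rw [h1]; ring
    rw [hdiff, abs_mul, abs_of_nonneg M.γ_pos.le]
    refine mul_le_mul_of_nonneg_left ?_ M.γ_pos.le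
    refine (Finset.abs_sum_le_sum_abs _ _).trans (Finset.sum_le_sum fun s _ => ?_)
    refine (abs_add_le _ _).trans (add_le_add ?_ ?_)
    · rw [abs_mul]
      refine mul_le_mul_of_nonneg_left ?_ (abs_nonneg _)
      rw [abs_of_nonneg (Finset.sum_nonneg fun a _ =>
        mul_nonneg (hπ'.1 s a) (M.P_nonneg s a s'))]
    · rw [abs_mul]
      refine mul_le_mul_of_nonneg_left ?_ (abs_nonneg _)
      refine (Finset.abs_sum_le_sum_abs _ _).trans (Finset.sum_le_sum fun a _ => ?_)
      rw [abs_mul, abs_of_nonneg (M.P_nonneg s a s')]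
  have main : ∑ s', |d' s' - d s'|
      ≤ M.γ * (∑ s, |d' s - d s| + ∑ s, |d s| * ∑ a, |π' s a - π s a|) := by
    calc ∑ s', |d' s' - d s'|
        ≤ ∑ s', M.γ * ∑ s, (|d' s - d s| * ∑ a, π' s a * M.P s a s'
            + |d s| * ∑ a, |π' s a - π s a| * M.P s a s') :=
          Finset.sum_le_sum fun s' _ => key s'
      _ = M.γ * ∑ s, (|d' s - d s| * ∑ s', ∑ a, π' s a * M.P s a s'
            + |d s| * ∑ a, |π' s a - π s a| * ∑ s', M.P s a s') := by
          rw [← Finset.mul_sum]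
          congr 1
          rw [Finset.sum_comm]
          refine Finset.sum_congr rfl fun s _ => ?_
          rw [Finset.sum_add_distrib, ← Finset.mul_sum]
          congr 1
          simp only [Finset.mul_sum]
          rw [Finset.sum_comm]
      _ = M.γ * (∑ s, |d' s - d s| + ∑ s, |d s| * ∑ a, |π' s a - π s a|) := by
          congr 1
          rw [Finset.sum_add_distrib]
          congr 1
          · exact Finset.sum_congr rfl fun s _ => by
              rw [sum_K_eq_one M hπ' s, mul_one]
          · refine Finset.sum_congr rfl fun s _ => ?_
            congr 1
            exact Finset.sum_congr rfl fun a _ => by rw [M.P_sum_one, mul_one]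
  have hsecond : ∑ s, |d s| * ∑ a, |π' s a - π s a| ≤ D := by
    calc ∑ s, |d s| * ∑ a, |π' s a - π s a|
        ≤ ∑ s, |d s| * D :=
          Finset.sum_le_sum fun s _ => mul_le_mul_of_nonneg_left (hD s) (abs_nonneg _)
      _ = (∑ s, |d s|) * D := by rw [Finset.sum_mul]
      _ ≤ 1 * D := mul_le_mul_of_nonneg_right (isD_sum_abs_le_one M hπ hd) hD0
      _ = D := one_mul D
  have hγ := M.γ_pos
  nlinarith [main, hsecond]

-- midrange bound
lemma midrange_bound [Nonempty S] (f e : S → ℝ) (hsum : ∑ s, e s = 0) (R : ℝ)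
    (hR : ∀ p : S × S, |f p.1 - f p.2| ≤ R) :
    |∑ s, e s * f s| ≤ (∑ s, |e s|) * (R / 2) := by
  obtain ⟨smax, -, hmax⟩ := Finset.exists_max_image Finset.univ f ⟨Classical.arbitrary S, Finset.mem_univ _⟩
  obtain ⟨smin, -, hmin⟩ := Finset.exists_min_image Finset.univ f ⟨Classical.arbitrary S, Finset.mem_univ _⟩
  set c : ℝ := (f smax + f smin) / 2 with hc
  have hrange : f smax - f smin ≤ R := by
    have := hR (smax, smin)
    simp only at this
    rw [abs_of_nonneg (by linarith [hmin smax (Finset.mem_univ _)])] at this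
    exact this
  have hfc : ∀ s, |f s - c| ≤ R / 2 := by
    intro s
    have h1 := hmax s (Finset.mem_univ _)
    have h2 := hmin s (Finset.mem_univ _)
    rw [abs_le]
    refine ⟨by simp only [hc]; linarith, by simp only [hc]; linarith⟩
  have heq : ∑ s, e s * f s = ∑ s, e s * (f s - c) := by
    simp only [mul_sub]
    rw [Finset.sum_sub_distrib, ← Finset.sum_mul, hsum, zero_mul, sub_zero]
  rw [heq]
  calc |∑ s, e s * (f s - c)| ≤ ∑ s, |e s * (f s - c)| := Finset.abs_sum_le_sum_abs _ _
    _ ≤ ∑ s, |e s| * (R / 2) := by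
        refine Finset.sum_le_sum fun s _ => ?_
        rw [abs_mul]
        exact mul_le_mul_of_nonneg_left (hfc s) (abs_nonneg _)
    _ = (∑ s, |e s|) * (R / 2) := by rw [Finset.sum_mul]

-- final algebra
lemma final_algebra (γ δ R 𝔸 ζ : ℝ) (hγ0 : 0 < γ) (hγ1 : γ < 1)
    (hδ : 0 < δ) (hR : 0 < R) (h𝔸 : 0 ≤ 𝔸)
    (hζ : ζ = (1 - γ) ^ 2 * 𝔸 / (γ * δ * R)) :
    ζ * 𝔸 - ζ * (γ * ζ * δ / (1 - γ) * (R / 2))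
      ≥ ((1 - γ) * 𝔸) ^ 2 / (2 * γ * δ * R) := by
  have h2 : (0:ℝ) < 1 - γ := by linarith
  have key : ζ * 𝔸 - ζ * (γ * ζ * δ / (1 - γ) * (R / 2))
      = (1 - γ) ^ 2 * 𝔸 ^ 2 * (1 + γ) / (2 * (γ * δ * R)) := by
    subst hζ
    field_simp
    ring
  have rhs_eq : ((1 - γ) * 𝔸) ^ 2 / (2 * γ * δ * R)
      = (1 - γ) ^ 2 * 𝔸 ^ 2 / (2 * (γ * δ * R)) := by
    rw [mul_pow]
    ring_nf
  rw [ge_iff_le, key, rhs_eq, div_le_div_iff₀ (by positivity) (by positivity)]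
  nlinarith [mul_nonneg (mul_nonneg (mul_nonneg (sq_nonneg ((1-γ)*𝔸)) hγ0.le) hγ0.le)
      (mul_pos hδ hR).le,
    mul_nonneg (sq_nonneg ((1-γ)*𝔸)) (mul_pos hγ0 (mul_pos hδ hR)).le]

/-- **Safe policy improvement with optimal mixing coefficient** (Lemma 2). -/
theorem safe_policy_improvement_optimal_mixing
    {S A : Type} [Fintype S] [Fintype A] [DecidableEq S] [Nonempty S] [Nonempty A]
    (M : FiniteMDP S A) (πt π Q : S → A → ℝ) (ζ : ℝ) (π' : S → A → ℝ) (d' d : S → ℝ)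
    (hπt : IsPolicy πt) (hπ : IsPolicy π)
    (hQ : IsQ M π Q) (hd : IsD M π d)
    (hAdv : 0 ≤ expPolAdv πt π Q d)
    (hpos : 0 < polDist πt π * advRange πt π Q)
    (hζdef : ζ = (1 - M.γ) ^ 2 * expPolAdv πt π Q d
        / (M.γ * polDist πt π * advRange πt π Q))
    (hζ1 : ζ ≤ 1)
    (hmix : ∀ s a, π' s a = ζ * πt s a + (1 - ζ) * π s a)
    (hd' : IsD M π' d') :
    Jret M π' d' - Jret M π d ≥
      ((1 - M.γ) * expPolAdv πt π Q d) ^ 2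
        / (2 * M.γ * polDist πt π * advRange πt π Q) := by
  have hγ0 := M.γ_pos
  have hγ1 := M.γ_lt_one
  have h1g : (0:ℝ) < 1 - M.γ := by linarith
  -- basic facts about δ and R
  have hδ_ge : ∀ s, ∑ a, |πt s a - π s a| ≤ polDist πt π := fun s =>
    le_ciSup (f := fun s => ∑ a, |πt s a - π s a|)
      (Set.Finite.bddAbove (Set.finite_range _)) s
  have hR_ge : ∀ p : S × S, |polAdv πt π Q p.1 - polAdv πt π Q p.2| ≤ advRange πt π Q :=
    fun p => le_ciSup (f := fun p : S × S => |polAdv πt π Q p.1 - polAdv πt π Q p.2|)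
      (Set.Finite.bddAbove (Set.finite_range _)) p
  have hδ0 : 0 ≤ polDist πt π :=
    le_trans (Finset.sum_nonneg fun a _ => abs_nonneg _) (hδ_ge (Classical.arbitrary S))
  have hR0 : 0 ≤ advRange πt π Q :=
    le_trans (abs_nonneg _) (hR_ge (Classical.arbitrary S, Classical.arbitrary S))
  have hδp : 0 < polDist πt π := by
    rcases hδ0.lt_or_eq with h | h
    · exact h
    · exfalso; rw [← h, zero_mul] at hpos; exact lt_irrefl 0 hpos
  have hRp : 0 < advRange πt π Q := by
    rcases hR0.lt_or_eq with h | h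
    · exact h
    · exfalso; rw [← h, mul_zero] at hpos; exact lt_irrefl 0 hpos
  have hζ0 : 0 ≤ ζ := by
    rw [hζdef]
    apply div_nonneg
    · exact mul_nonneg (by positivity) hAdv
    · positivity
  -- π' is a policy
  have hπ'pol : IsPolicy π' := by
    constructor
    · intro s a
      rw [hmix s a]
      have := hπt.1 s a; have := hπ.1 s a
      nlinarith
    · intro s
      calc ∑ a, π' s a = ∑ a, (ζ * πt s a + (1 - ζ) * π s a) :=
            Finset.sum_congr rfl fun a _ => hmix s a
        _ = ζ * ∑ a, πt s a + (1 - ζ) * ∑ a, π s a := by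
            rw [Finset.sum_add_distrib, Finset.mul_sum, Finset.mul_sum]
        _ = 1 := by rw [hπt.2 s, hπ.2 s]; ring
  -- pointwise advantage scaling
  have hA'eq : ∀ s, polAdv π' π Q s = ζ * polAdv πt π Q s := by
    intro s
    unfold polAdv
    rw [Finset.mul_sum]
    refine Finset.sum_congr rfl fun a _ => ?_
    rw [hmix s a]; ring
  -- performance difference
  have hperf : Jret M π' d' - Jret M π d = ∑ s, d' s * polAdv π' π Q s := by
    rw [jret_formula M π' π Q d' hQ hd', jret_formula M π π Q d hQ hd]
    simp only [sub_self, mul_zero, Finset.sum_const_zero, zero_add, add_sub_cancel_right]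
    refine Finset.sum_congr rfl fun s _ => ?_
    unfold polAdv
    congr 1
    rw [← Finset.sum_sub_distrib]
    exact Finset.sum_congr rfl fun a _ => by ring
  -- split
  have hsplit : ∑ s, d' s * polAdv π' π Q s
      = ζ * expPolAdv πt π Q d + ζ * ∑ s, (d' s - d s) * polAdv πt π Q s := by
    unfold expPolAdv
    simp only [hA'eq]
    rw [Finset.mul_sum, Finset.mul_sum, ← Finset.sum_add_distrib]
    refine Finset.sum_congr rfl fun s _ => ?_
    ring
  -- e sums to zero
  have hesum : ∑ s, (d' s - d s) = 0 := by
    rw [Finset.sum_sub_distrib, isD_sum_eq_one M hπ'pol hd', isD_sum_eq_one M hπ hd,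
      sub_self]
  -- midrange bound on the error term
  have hT : |∑ s, (d' s - d s) * polAdv πt π Q s|
      ≤ (∑ s, |d' s - d s|) * (advRange πt π Q / 2) :=
    midrange_bound (polAdv πt π Q) (fun s => d' s - d s) hesum (advRange πt π Q) hR_ge
  -- occupancy bound
  have hDs : ∀ s, ∑ a, |π' s a - π s a| ≤ ζ * polDist πt π := by
    intro s
    have heq : ∀ a, |π' s a - π s a| = ζ * |πt s a - π s a| := by
      intro a
      have : π' s a - π s a = ζ * (πt s a - π s a) := by rw [hmix s a]; ring
      rw [this, abs_mul, abs_of_nonneg hζ0]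
    calc ∑ a, |π' s a - π s a| = ζ * ∑ a, |πt s a - π s a| := by
          rw [Finset.mul_sum]; exact Finset.sum_congr rfl fun a _ => heq a
      _ ≤ ζ * polDist πt π := mul_le_mul_of_nonneg_left (hδ_ge s) hζ0
  have hocc : (1 - M.γ) * ∑ s, |d' s - d s| ≤ M.γ * (ζ * polDist πt π) :=
    occ_diff_bound M hπ'pol hπ hd' hd (mul_nonneg hζ0 hδ0) hDs
  have hX0 : 0 ≤ ∑ s, |d' s - d s| := Finset.sum_nonneg fun s _ => abs_nonneg _
  have hXle : ∑ s, |d' s - d s| ≤ M.γ * ζ * polDist πt π / (1 - M.γ) := by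
    rw [le_div_iff₀ h1g]
    nlinarith [hocc]
  -- chain of inequalities
  have hchain : Jret M π' d' - Jret M π d
      ≥ ζ * expPolAdv πt π Q d
        - ζ * (M.γ * ζ * polDist πt π / (1 - M.γ) * (advRange πt π Q / 2)) := by
    rw [hperf, hsplit]
    have hTlow : -((∑ s, |d' s - d s|) * (advRange πt π Q / 2))
        ≤ ∑ s, (d' s - d s) * polAdv πt π Q s := neg_le_of_abs_le hT
    have h3 : (∑ s, |d' s - d s|) * (advRange πt π Q / 2)
        ≤ M.γ * ζ * polDist πt π / (1 - M.γ) * (advRange πt π Q / 2) :=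
      mul_le_mul_of_nonneg_right hXle (by positivity)
    nlinarith [mul_le_mul_of_nonneg_left hTlow hζ0, mul_le_mul_of_nonneg_left h3 hζ0]
  refine le_trans ?_ hchain
  have := final_algebra M.γ (polDist πt π) (advRange πt π Q) (expPolAdv πt π Q d) ζ
    hγ0 hγ1 hδp hRp hAdv (by rw [hζdef])
  exact this
end

section
/- Bretagnolle–Huber inequality (Eq. (A.8)): Let p and q be probability vectors on a nonempty finite set A (p(a), q(a) ≥ 0, ∑_a p(a) = ∑_a q(a) = 1) with q(a) > 0 for all a. Then (1/2)·∑_{a∈A} |p(a) − q(a)| ≤ √(1 − exp(−D_KL(p‖q))). -/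
open Finset

/-- **Bretagnolle–Huber inequality** (Eq. (A.8)):
`(1/2)·∑_a |p(a) − q(a)| ≤ √(1 − exp(−D_KL(p‖q)))`. -/
theorem bretagnolle_huber
    {A : Type} [Fintype A] [Nonempty A]
    (p q : A → ℝ)
    (hp0 : ∀ a, 0 ≤ p a) (hq0 : ∀ a, 0 < q a)
    (hp1 : ∑ a, p a = 1) (hq1 : ∑ a, q a = 1) :
    (1 / 2) * ∑ a, |p a - q a| ≤ Real.sqrt (1 - Real.exp (-(KLdiv p q))) := by
  classical
  set S : Finset A := Finset.univ.filter (fun a => 0 < p a) with hS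
  have hpS : ∑ a ∈ S, p a = 1 := by
    rw [← hp1]
    apply Finset.sum_subset (Finset.subset_univ _)
    intro a _ ha
    have h : ¬ 0 < p a := by simpa [hS] using ha
    linarith [hp0 a]
  -- Jensen: exp(-KL/2) ≤ ∑_{a ∈ S} √(p a * q a)
  have hjensen : Real.exp (-(KLdiv p q) / 2) ≤ ∑ a ∈ S, Real.sqrt (p a * q a) := by
    have hw : ∀ a ∈ S, 0 ≤ p a := fun a _ => hp0 a
    have key := convexOn_exp.map_sum_le (t := S)
      (w := p) (p := fun a => Real.log (Real.sqrt (q a / p a))) hw hpS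
      (fun a _ => Set.mem_univ _)
    have h1 : ∑ a ∈ S, p a • Real.log (Real.sqrt (q a / p a)) = -(KLdiv p q) / 2 := by
      have hterm : ∀ a ∈ S, p a • Real.log (Real.sqrt (q a / p a))
          = -(p a * Real.log (p a / q a)) / 2 := by
        intro a ha
        have hpa : 0 < p a := by simpa [hS] using ha
        rw [smul_eq_mul, Real.log_sqrt (div_nonneg (hq0 a).le hpa.le),
          Real.log_div (hq0 a).ne' hpa.ne', Real.log_div hpa.ne' (hq0 a).ne']
        ring
      rw [Finset.sum_congr rfl hterm, ← Finset.sum_div, Finset.sum_neg_distrib]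
      simp only [KLdiv, ← hS]
    have h2 : ∑ a ∈ S, p a • Real.exp (Real.log (Real.sqrt (q a / p a)))
        = ∑ a ∈ S, Real.sqrt (p a * q a) := by
      apply Finset.sum_congr rfl
      intro a ha
      have hpa : 0 < p a := by simpa [hS] using ha
      have hs : 0 < Real.sqrt (q a / p a) :=
        Real.sqrt_pos.2 (div_pos (hq0 a) hpa)
      rw [Real.exp_log hs, smul_eq_mul]
      rw [show p a * Real.sqrt (q a / p a)
          = Real.sqrt (p a ^ 2) * Real.sqrt (q a / p a) by
        rw [Real.sqrt_sq hpa.le], ← Real.sqrt_mul (sq_nonneg _)]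
      congr 1
      field_simp
    rw [h1] at key
    rw [h2] at key
    exact key
  -- hence exp(-KL) ≤ (∑_univ √(p q))²
  have hsub : ∑ a ∈ S, Real.sqrt (p a * q a) ≤ ∑ a, Real.sqrt (p a * q a) :=
    Finset.sum_le_sum_of_subset_of_nonneg (Finset.subset_univ _)
      (fun a _ _ => Real.sqrt_nonneg _)
  have hexp : Real.exp (-(KLdiv p q)) ≤ (∑ a, Real.sqrt (p a * q a)) ^ 2 := by
    have h0 : 0 ≤ Real.exp (-(KLdiv p q) / 2) := (Real.exp_pos _).le
    have := mul_le_mul (hjensen.trans hsub) (hjensen.trans hsub) h0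
      (Finset.sum_nonneg fun a _ => Real.sqrt_nonneg _)
    calc Real.exp (-(KLdiv p q)) = Real.exp (-(KLdiv p q) / 2) * Real.exp (-(KLdiv p q) / 2) := by
          rw [← Real.exp_add]; ring_nf
      _ ≤ _ := by rw [sq]; exact this
  -- Cauchy–Schwarz with min and max
  have hCS : (∑ a, Real.sqrt (p a * q a)) ^ 2
      ≤ (∑ a, min (p a) (q a)) * (∑ a, max (p a) (q a)) := by
    apply Finset.sum_sq_le_sum_mul_sum_of_sq_eq_mul
    · intro a _; exact le_min (hp0 a) (hq0 a).le
    · intro a _; exact le_max_of_le_left (hp0 a)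
    · intro a _
      rw [Real.sq_sqrt (mul_nonneg (hp0 a) (hq0 a).le), min_mul_max]
  set T : ℝ := ∑ a, |p a - q a| with hT
  have hsum_minmax : (∑ a, min (p a) (q a)) + (∑ a, max (p a) (q a)) = 2 := by
    rw [← Finset.sum_add_distrib]
    have : ∀ a : A, min (p a) (q a) + max (p a) (q a) = p a + q a :=
      fun a => min_add_max _ _
    simp_rw [this, Finset.sum_add_distrib, hp1, hq1]; norm_num
  have hdiff_minmax : (∑ a, max (p a) (q a)) - (∑ a, min (p a) (q a)) = T := by
    rw [hT, ← Finset.sum_sub_distrib]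
    apply Finset.sum_congr rfl
    intro a _
    rw [max_comm, min_comm]
    exact max_sub_min_eq_abs _ _
  have hmin : (∑ a, min (p a) (q a)) = (2 - T) / 2 := by linarith
  have hmax : (∑ a, max (p a) (q a)) = (2 + T) / 2 := by linarith
  have hfinal : Real.exp (-(KLdiv p q)) ≤ 1 - (T / 2) ^ 2 := by
    calc Real.exp (-(KLdiv p q)) ≤ _ := hexp.trans hCS
      _ = 1 - (T / 2) ^ 2 := by rw [hmin, hmax]; ring
  rw [show (1 : ℝ) / 2 * T = T / 2 by ring]
  rw [Real.le_sqrt (by positivity)]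
  all_goals linarith [sq_nonneg (T / 2)]
end

section
/- Advantage-range bound via KL divergence (Eq. (A.13)): For any policies π̃ and π of a finite MDP with π(s,a) > 0 for all s, a, ΔA^{π̃}_π ≤ (2√2/(1−γ)) · √( max_{s∈S} D_KL(π̃(s,·) ‖ π(s,·)) ). -/
open Finset

variable {S A : Type} [Fintype S] [Fintype A] [DecidableEq S]

/-!
Solving the Bellman equation at a maximiser of `|Q_π|` gives `|Q_π| ≤ 1 / (1 - γ)`, hence
`|A^{π̃}_π(s)| ≤ ‖π̃(s,·) - π(s,·)‖₁ / (1 - γ)`; the range of `A^{π̃}_π` is at most twice this, and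
Pinsker's inequality `‖p - q‖₁ ≤ √(2 D_KL(p‖q))` finishes.

Pinsker's inequality follows from the pointwise bound `x log x - x + 1 ≥ 3 (x - 1)² / (2 (x + 2))`:
at `x = p(a) / q(a)`, weighted by `q(a)`, it gives `D_KL(p‖q) ≥ (3/2) ∑ (p - q)² / (p + 2q)`, and
Cauchy–Schwarz (Titu's form) with the weights `p + 2q`, which sum to `3`, bounds this below by
`‖p - q‖₁² / 2`.
-/

section Pinsker

open Real InformationTheory

variable {B : Type} [Fintype B] {p q : B → ℝ}

-- `x` times the gap in this inequality is `klFun x - 3 (x - 1)² / (2 (x + 2))`. The right-hand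
-- side has derivative `(x - 1)³ / (x² (x + 2)²)`, so its minimum is `5 / 2`, at `x = 1`.
lemma five_halves_le_log_add_inv {x : ℝ} (hx : 0 < x) :
    5 / 2 ≤ log x + 1 / (4 * x) + 27 / (4 * (x + 2)) := by
  set ψ : ℝ → ℝ := fun y => log y + 1 / (4 * y) + 27 / (4 * (y + 2))
  set ψ' : ℝ → ℝ := fun y => (y - 1) ^ 3 / (y ^ 2 * (y + 2) ^ 2)
  have hderiv : ∀ y, 0 < y → HasDerivAt ψ (ψ' y) y := by
    intro y hy
    have h := ((hasDerivAt_log hy.ne').add ((hasDerivAt_inv hy.ne').div_const 4)).add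
      ((((hasDerivAt_id y).add_const 2).inv (by rw [id]; positivity)).const_mul (27 / 4))
    refine (h.congr_deriv ?_).congr_of_eventuallyEq (.of_forall fun z => ?_)
    · simp only [ψ', id]
      field_simp
      ring
    · simp only [ψ, Pi.add_apply, Pi.inv_apply, id, div_eq_mul_inv, mul_inv]
      ring
  have hcont : ContinuousOn ψ (Set.Ioi 0) := fun y hy =>
    (hderiv y hy).continuousAt.continuousWithinAt
  have hψ1 : ψ 1 = 5 / 2 := by norm_num [ψ]
  rcases le_total x 1 with hx1 | hx1
  · have hanti : AntitoneOn ψ (Set.Ioc 0 1) := by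
      refine antitoneOn_of_hasDerivWithinAt_nonpos (f' := ψ') (convex_Ioc 0 1)
        (hcont.mono Set.Ioc_subset_Ioi_self) (fun y hy => ?_) (fun y hy => ?_)
      · rw [interior_Ioc] at hy
        exact (hderiv y hy.1).hasDerivWithinAt
      · rw [interior_Ioc] at hy
        have : (y - 1) ^ 3 ≤ 0 := Odd.pow_nonpos (by decide) (by linarith [hy.2])
        exact div_nonpos_of_nonpos_of_nonneg this (by positivity)
    exact hψ1 ▸ hanti ⟨hx, hx1⟩ ⟨one_pos, le_rfl⟩ hx1
  · have hmono : MonotoneOn ψ (Set.Ici 1) := by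
      refine monotoneOn_of_hasDerivWithinAt_nonneg (f' := ψ') (convex_Ici 1)
        (hcont.mono fun y (hy : 1 ≤ y) => one_pos.trans_le hy) (fun y hy => ?_) (fun y hy => ?_)
      · rw [interior_Ici] at hy
        exact (hderiv y (one_pos.trans hy)).hasDerivWithinAt
      · rw [interior_Ici] at hy
        have : 0 ≤ (y - 1) ^ 3 := pow_nonneg (by linarith [hy.out]) 3
        positivity
    exact hψ1 ▸ hmono Set.self_mem_Ici hx1 hx1

lemma sq_sub_one_div_le_klFun {x : ℝ} (hx : 0 ≤ x) :
    3 * (x - 1) ^ 2 / (2 * (x + 2)) ≤ klFun x := by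
  rcases hx.eq_or_lt with rfl | hx
  · norm_num [klFun_zero]
  have h := five_halves_le_log_add_inv hx
  rw [klFun_apply, div_le_iff₀ (by positivity)]
  have key : 3 * (x - 1) ^ 2 = (x * log x + 1 - x) * (2 * (x + 2))
      - 2 * x * (x + 2) * (log x + 1 / (4 * x) + 27 / (4 * (x + 2)) - 5 / 2) := by
    field_simp; ring
  rw [key]
  have : 0 ≤ 2 * x * (x + 2) * (log x + 1 / (4 * x) + 27 / (4 * (x + 2)) - 5 / 2) := by
    have := sub_nonneg.2 h; positivity
  linarith

lemma KLdiv_eq_sum_mul_klFun (hp : ∀ a, 0 ≤ p a) (hq : ∀ a, 0 < q a)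
    (hp1 : ∑ a, p a = 1) (hq1 : ∑ a, q a = 1) :
    KLdiv p q = ∑ a, q a * klFun (p a / q a) := by
  have hterm : ∀ a, q a * klFun (p a / q a) = p a * log (p a / q a) + (q a - p a) := by
    intro a
    rw [klFun_apply]
    field_simp [(hq a).ne']
    ring
  have hfilter : KLdiv p q = ∑ a, p a * log (p a / q a) :=
    sum_filter_of_ne fun a _ ha => (hp a).lt_of_ne' (left_ne_zero_of_mul ha)
  simp only [hterm, sum_add_distrib, sum_sub_distrib, hp1, hq1, hfilter]
  ring

theorem sq_sum_abs_sub_le_two_mul_KLdiv (hp : ∀ a, 0 ≤ p a) (hq : ∀ a, 0 < q a)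
    (hp1 : ∑ a, p a = 1) (hq1 : ∑ a, q a = 1) :
    (∑ a, |p a - q a|) ^ 2 ≤ 2 * KLdiv p q := by
  have hw : ∀ a, 0 < p a + 2 * q a := fun a => by linarith [hp a, hq a]
  have hpointwise : ∀ a, 3 / 2 * (|p a - q a| ^ 2 / (p a + 2 * q a)) ≤ q a * klFun (p a / q a) := by
    intro a
    have hqa := hq a
    calc 3 / 2 * (|p a - q a| ^ 2 / (p a + 2 * q a))
        = q a * (3 * (p a / q a - 1) ^ 2 / (2 * (p a / q a + 2))) := by
          rw [sq_abs]
          field_simp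
      _ ≤ q a * klFun (p a / q a) := mul_le_mul_of_nonneg_left
          (sq_sub_one_div_le_klFun (div_nonneg (hp a) hqa.le)) hqa.le
  have htitu := sq_sum_div_le_sum_sq_div univ (fun a => |p a - q a|)
    (fun a _ => hw a)
  have hweights : ∑ a, (p a + 2 * q a) = 3 := by
    rw [sum_add_distrib, ← mul_sum, hp1, hq1]; norm_num
  rw [hweights] at htitu
  have hsum := sum_le_sum fun a (_ : a ∈ univ) => hpointwise a
  rw [← mul_sum, ← KLdiv_eq_sum_mul_klFun hp hq hp1 hq1] at hsum
  linarith

theorem sum_abs_sub_le_sqrt_two_mul_KLdiv (hp : ∀ a, 0 ≤ p a) (hq : ∀ a, 0 < q a)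
    (hp1 : ∑ a, p a = 1) (hq1 : ∑ a, q a = 1) :
    ∑ a, |p a - q a| ≤ √(2 * KLdiv p q) :=
  le_sqrt_of_sq_le (sq_sum_abs_sub_le_two_mul_KLdiv hp hq hp1 hq1)

end Pinsker

lemma abs_sum_mul_le_of_sum_eq_one {ι : Type*} [Fintype ι] {w f : ι → ℝ} {m : ℝ}
    (hw : ∀ i, 0 ≤ w i) (hw1 : ∑ i, w i = 1) (hf : ∀ i, |f i| ≤ m) :
    |∑ i, w i * f i| ≤ m :=
  calc |∑ i, w i * f i| ≤ ∑ i, w i * |f i| := by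
        simpa only [abs_mul, abs_of_nonneg (hw _)] using
          abs_sum_le_sum_abs (fun i => w i * f i) univ
    _ ≤ ∑ i, w i * m := sum_le_sum fun i _ => mul_le_mul_of_nonneg_left (hf i) (hw i)
    _ = m := by rw [← sum_mul, hw1, one_mul]

lemma IsQ.abs_le {S A : Type} [Fintype S] [Fintype A] {M : FiniteMDP S A} {π Q : S → A → ℝ}
    (hQ : IsQ M π Q) (hπ : IsPolicy π) (s : S) (a : A) :
    |Q s a| ≤ 1 / (1 - M.γ) := by
  obtain ⟨⟨s₀, a₀⟩, -, hmax⟩ := exists_max_image univ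
    (fun x : S × A => |Q x.1 x.2|) ⟨(s, a), mem_univ _⟩
  set m := |Q s₀ a₀|
  have hle : ∀ s a, |Q s a| ≤ m := fun s a => hmax (s, a) (mem_univ _)
  have hnext : |∑ s', M.P s₀ a₀ s' * ∑ a', π s' a' * Q s' a'| ≤ m :=
    abs_sum_mul_le_of_sum_eq_one (M.P_nonneg s₀ a₀) (M.P_sum_one s₀ a₀) fun s' =>
      abs_sum_mul_le_of_sum_eq_one (hπ.1 s') (hπ.2 s') (hle s')
  have hm : m ≤ 1 + M.γ * m :=
    calc m = |M.r s₀ a₀ + M.γ * ∑ s', M.P s₀ a₀ s' * ∑ a', π s' a' * Q s' a'| := by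
          rw [← hQ s₀ a₀]
      _ ≤ |M.r s₀ a₀| + M.γ * |∑ s', M.P s₀ a₀ s' * ∑ a', π s' a' * Q s' a'| :=
          (abs_add_le _ _).trans_eq (by rw [abs_mul, abs_of_pos M.γ_pos])
      _ ≤ 1 + M.γ * m := add_le_add (M.r_bound s₀ a₀)
          (mul_le_mul_of_nonneg_left hnext M.γ_pos.le)
  have hγ : 0 < 1 - M.γ := sub_pos.2 M.γ_lt_one
  calc |Q s a| ≤ m := hle s a
    _ ≤ 1 / (1 - M.γ) := by rw [le_div_iff₀ hγ]; linarith

lemma abs_polAdv_le {S A : Type} [Fintype A] {π' π Q : S → A → ℝ} {C : ℝ}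
    (hQ : ∀ s a, |Q s a| ≤ C) (s : S) :
    |polAdv π' π Q s| ≤ C * ∑ a, |π' s a - π s a| :=
  calc |polAdv π' π Q s| ≤ ∑ a, |π' s a - π s a| * |Q s a| := by
        simpa only [polAdv, abs_mul] using
          abs_sum_le_sum_abs (fun a => (π' s a - π s a) * Q s a) univ
    _ ≤ ∑ a, |π' s a - π s a| * C :=
        sum_le_sum fun a _ => mul_le_mul_of_nonneg_left (hQ s a) (abs_nonneg _)
    _ = C * ∑ a, |π' s a - π s a| := by rw [← sum_mul, mul_comm]

theorem advRange_le_kl_general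
    {S A : Type} [Fintype S] [Fintype A]
    (M : FiniteMDP S A) (πt π Q : S → A → ℝ)
    (hπt : IsPolicy πt) (hπ : IsPolicy π) (hπpos : ∀ s a, 0 < π s a)
    (hQ : IsQ M π Q) :
    advRange πt π Q ≤
      (2 * Real.sqrt 2 / (1 - M.γ)) * Real.sqrt (⨆ s : S, KLdiv (πt s) (π s)) := by
  set K := ⨆ s : S, KLdiv (πt s) (π s)
  have hγ : 0 < 1 - M.γ := sub_pos.2 M.γ_lt_one
  have hadv : ∀ s, |polAdv πt π Q s| ≤ 1 / (1 - M.γ) * √(2 * K) := fun s =>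
    calc |polAdv πt π Q s| ≤ 1 / (1 - M.γ) * ∑ a, |πt s a - π s a| :=
          abs_polAdv_le (hQ.abs_le hπ) s
      _ ≤ 1 / (1 - M.γ) * √(2 * KLdiv (πt s) (π s)) := by
          gcongr
          exact sum_abs_sub_le_sqrt_two_mul_KLdiv (hπt.1 s) (hπpos s) (hπt.2 s) (hπ.2 s)
      _ ≤ 1 / (1 - M.γ) * √(2 * K) := by
          gcongr
          exact le_ciSup (Set.finite_range fun s => KLdiv (πt s) (π s)).bddAbove s
  refine Real.iSup_le (fun x : S × S => ?_) (by positivity)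
  calc |polAdv πt π Q x.1 - polAdv πt π Q x.2|
      ≤ |polAdv πt π Q x.1| + |polAdv πt π Q x.2| := abs_sub _ _
    _ ≤ 2 * (1 / (1 - M.γ) * √(2 * K)) := by linarith [hadv x.1, hadv x.2]
    _ = 2 * √2 / (1 - M.γ) * √K := by rw [Real.sqrt_mul zero_le_two]; ring

/-- **Advantage-range bound via KL divergence** (Eq. (A.13)):
`ΔA^{π̃}_π ≤ (2√2/(1−γ))·√(max_s D_KL(π̃(s,·)‖π(s,·)))`. -/
theorem advRange_le_kl
    {S A : Type} [Fintype S] [Fintype A] [DecidableEq S] [Nonempty S] [Nonempty A]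
    (M : FiniteMDP S A) (πt π Q : S → A → ℝ)
    (hπt : IsPolicy πt) (hπ : IsPolicy π) (hπpos : ∀ s a, 0 < π s a)
    (hQ : IsQ M π Q) :
    advRange πt π Q ≤
      (2 * Real.sqrt 2 / (1 - M.γ)) * Real.sqrt (⨆ s : S, KLdiv (πt s) (π s)) :=
  advRange_le_kl_general M πt π Q hπt hπ hπpos hQ
end

section
/- Existence and uniqueness of the discounted state distribution: For any finite MDP and any policy π, there exists exactly one function d : S → ℝ satisfying d(s') = (1−γ)·𝟙[s'=s₀] + γ ∑_s d(s) ∑_a π(s,a) P(s,a,s') for all s'; moreover this d satisfies d(s) ≥ 0 for all s and ∑_{s∈S} d(s) = 1. -/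
open Finset

variable {S A : Type} [Fintype S] [Fintype A] [DecidableEq S]

/-!
Write `K` for the state-to-state transition matrix of `π`; it is row-stochastic, and the
occupancy equation reads `d = (1 - γ) e_{s₀} + γ d K`. Right multiplication by `K` preserves
coordinate sums, so summing a nonnegative `y ≤ γ y K` gives `∑ y ≤ γ ∑ y`, which forces `y = 0`.
Applied to `|d₁ - d₂|` this gives uniqueness, hence invertibility of `I - γ K` in finite
dimension and existence; applied to the negative part of a solution it gives `d ≥ 0`; and summing
the equation gives `(1 - γ) ∑ d = 1 - γ`.
-/

namespace Matrix

variable {n : Type*} [Fintype n] [DecidableEq n] {M : Matrix n n ℝ} {γ : ℝ} {x b : n → ℝ}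

theorem sum_vecMul_of_mem_rowStochastic (hM : M ∈ rowStochastic ℝ n) (x : n → ℝ) :
    ∑ j, (x ᵥ* M) j = ∑ i, x i := by
  simpa only [dotProduct_one] using
    (dotProduct_mulVec x M 1).symm.trans (congrArg (x ⬝ᵥ ·) (one_vecMul_of_mem_rowStochastic hM))

theorem eq_zero_of_le_smul_vecMul (hM : M ∈ rowStochastic ℝ n) (hγ : γ < 1) (hx : 0 ≤ x)
    (hle : x ≤ γ • (x ᵥ* M)) : x = 0 := by
  have hsum : ∑ i, x i ≤ γ * ∑ i, x i := by
    calc ∑ i, x i ≤ ∑ j, γ * (x ᵥ* M) j := sum_le_sum fun j _ => hle j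
      _ = γ * ∑ i, x i := by rw [← mul_sum, sum_vecMul_of_mem_rowStochastic hM]
  have hsum_nonneg : 0 ≤ ∑ i, x i := sum_nonneg fun i _ => hx i
  have hsum_zero : ∑ i, x i = 0 := by nlinarith
  funext i
  exact (sum_eq_zero_iff_of_nonneg fun i _ => hx i).1 hsum_zero i (mem_univ i)

theorem eq_zero_of_eq_smul_vecMul (hM : M ∈ rowStochastic ℝ n) (hγ₀ : 0 ≤ γ) (hγ : γ < 1)
    (h : x = γ • (x ᵥ* M)) : x = 0 := by
  have habs_le : |x| ≤ γ • (|x| ᵥ* M) := fun j => by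
    calc |x j| = γ * |∑ i, x i * M i j| := by
          rw [congrFun h j, Pi.smul_apply, smul_eq_mul, abs_mul, abs_of_nonneg hγ₀]; rfl
      _ ≤ γ * ∑ i, |x i| * M i j := by
          gcongr
          refine (abs_sum_le_sum_abs _ _).trans_eq (sum_congr rfl fun i _ => ?_)
          rw [abs_mul, abs_of_nonneg (nonneg_of_mem_rowStochastic hM)]
  have habs_zero := eq_zero_of_le_smul_vecMul hM hγ (abs_nonneg x) habs_le
  exact funext fun i => abs_eq_zero.1 (congrFun habs_zero i)

theorem existsUnique_eq_add_smul_vecMul (hM : M ∈ rowStochastic ℝ n) (hγ₀ : 0 ≤ γ) (hγ : γ < 1)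
    (b : n → ℝ) : ∃! x : n → ℝ, x = b + γ • (x ᵥ* M) := by
  set L : (n → ℝ) →ₗ[ℝ] n → ℝ := LinearMap.id - γ • M.vecMulLinear
  have hL : ∀ x, L x = x - γ • (x ᵥ* M) := fun x => rfl
  have hL_inj : Function.Injective L := by
    refine (injective_iff_map_eq_zero L).2 fun x hx => eq_zero_of_eq_smul_vecMul hM hγ₀ hγ ?_
    rwa [hL, sub_eq_zero] at hx
  obtain ⟨x, hx⟩ := LinearMap.injective_iff_surjective.1 hL_inj b
  refine ⟨x, by rwa [hL, sub_eq_iff_eq_add] at hx, fun y hy => hL_inj ?_⟩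
  rw [hx, hL, sub_eq_iff_eq_add]
  exact hy

theorem nonneg_of_eq_add_smul_vecMul (hM : M ∈ rowStochastic ℝ n) (hγ₀ : 0 ≤ γ) (hγ : γ < 1)
    (hb : 0 ≤ b) (h : x = b + γ • (x ᵥ* M)) : 0 ≤ x := by
  have hneg_le : x⁻ ≤ γ • (x⁻ ᵥ* M) := fun j => by
    have hvecMul : 0 ≤ γ * (x⁻ ᵥ* M) j :=
      mul_nonneg hγ₀ (nonneg_vecMul_of_mem_rowStochastic hM (negPart_nonneg x) j)
    refine (Pi.negPart_apply x j).trans_le (max_le ?_ hvecMul)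
    calc -x j = -b j + γ * ∑ i, -x i * M i j := by
          rw [congrFun h j]
          simp only [Pi.add_apply, Pi.smul_apply, smul_eq_mul, vecMul, dotProduct, neg_mul,
            sum_neg_distrib]
          ring
      _ ≤ γ * ∑ i, x⁻ i * M i j := by
          have hb_j : 0 ≤ b j := hb j
          have hterm : ∑ i, -x i * M i j ≤ ∑ i, x⁻ i * M i j :=
            sum_le_sum fun i _ => mul_le_mul_of_nonneg_right
              ((neg_le_negPart (x i)).trans_eq (Pi.negPart_apply x i).symm)
              (nonneg_of_mem_rowStochastic hM)
          linarith [mul_le_mul_of_nonneg_left hterm hγ₀]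
  exact negPart_eq_zero.1 (eq_zero_of_le_smul_vecMul hM hγ (negPart_nonneg x) hneg_le)

theorem sum_eq_of_eq_add_smul_vecMul (hM : M ∈ rowStochastic ℝ n) (h : x = b + γ • (x ᵥ* M)) :
    (1 - γ) * ∑ i, x i = ∑ i, b i := by
  have hsum := congrArg (fun y : n → ℝ => ∑ i, y i) h
  simp only [Pi.add_apply, Pi.smul_apply, smul_eq_mul, sum_add_distrib, ← mul_sum,
    sum_vecMul_of_mem_rowStochastic hM] at hsum
  linarith

end Matrix

namespace FiniteMDP

open Matrix

def transitionMatrix (M : FiniteMDP S A) (π : S → A → ℝ) : Matrix S S ℝ :=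
  fun s s' => ∑ a, π s a * M.P s a s'

theorem transitionMatrix_mem_rowStochastic (M : FiniteMDP S A) {π : S → A → ℝ}
    (hπ : IsPolicy π) : M.transitionMatrix π ∈ rowStochastic ℝ S := by
  refine mem_rowStochastic_iff_sum.2 ⟨fun s s' => ?_, fun s => ?_⟩
  · exact sum_nonneg fun a _ => mul_nonneg (hπ.1 s a) (M.P_nonneg s a s')
  · simp only [transitionMatrix]
    rw [sum_comm]
    simp only [← mul_sum, M.P_sum_one, mul_one, hπ.2 s]

theorem isD_iff (M : FiniteMDP S A) (π : S → A → ℝ) (d : S → ℝ) :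
    IsD M π d ↔ d = (1 - M.γ) • Pi.single M.s0 1 + M.γ • (d ᵥ* M.transitionMatrix π) := by
  simp only [IsD, funext_iff, Pi.add_apply, Pi.smul_apply, smul_eq_mul, Pi.single_apply,
    vecMul, dotProduct, transitionMatrix]

end FiniteMDP

theorem d_exists_unique_and_probability_general
    {S A : Type} [Fintype S] [Fintype A] [DecidableEq S]
    (M : FiniteMDP S A) (π : S → A → ℝ) (hπ : IsPolicy π) :
    (∃! d : S → ℝ, IsD M π d) ∧
      ∀ d : S → ℝ, IsD M π d → (∀ s, 0 ≤ d s) ∧ ∑ s, d s = 1 := by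
  have hK := M.transitionMatrix_mem_rowStochastic hπ
  have hγ₀ := M.γ_pos.le
  have hγ₁ := M.γ_lt_one
  simp only [FiniteMDP.isD_iff]
  refine ⟨Matrix.existsUnique_eq_add_smul_vecMul hK hγ₀ hγ₁ _, fun d hd => ⟨?_, ?_⟩⟩
  · have hinit : 0 ≤ (1 - M.γ) • (Pi.single M.s0 1 : S → ℝ) :=
      smul_nonneg (by linarith) (Pi.single_nonneg.2 zero_le_one)
    exact Matrix.nonneg_of_eq_add_smul_vecMul hK hγ₀ hγ₁ hinit hd
  · have hsum := Matrix.sum_eq_of_eq_add_smul_vecMul hK hd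
    simp only [Pi.smul_apply, smul_eq_mul, ← mul_sum, sum_pi_single', if_pos (mem_univ _)] at hsum
    exact mul_left_cancel₀ (by linarith) hsum

/-- **Existence and uniqueness of the discounted state distribution**: there is
exactly one `d` satisfying the occupancy fixed-point equation of `π`, and it is
a probability distribution on `S`. -/
theorem d_exists_unique_and_probability
    {S A : Type} [Fintype S] [Fintype A] [DecidableEq S] [Nonempty S] [Nonempty A]
    (M : FiniteMDP S A) (π : S → A → ℝ) (hπ : IsPolicy π) :
    (∃! d : S → ℝ, IsD M π d) ∧
      ∀ d : S → ℝ, IsD M π d → (∀ s, 0 ≤ d s) ∧ ∑ s, d s = 1 :=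
  d_exists_unique_and_probability_general M π hπ
end

section
/- L1 perturbation bound for discounted state distributions: For any two policies π' and π of a finite MDP, ∑_{s∈S} |d^{π'}(s) − d^{π}(s)| ≤ (γ/(1−γ)²) · δ(π',π). -/
open Finset

variable {S A : Type} [Fintype S] [Fintype A] [DecidableEq S]

/-- **L1 perturbation bound for discounted state distributions**:
`∑_s |d^{π'}(s) − d^{π}(s)| ≤ (γ/(1−γ)²)·δ(π',π)`. -/
theorem occupancy_l1_perturbation
    {S A : Type} [Fintype S] [Fintype A] [DecidableEq S] [Nonempty S] [Nonempty A]
    (M : FiniteMDP S A) (π' π : S → A → ℝ) (d' d : S → ℝ)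
    (hπ' : IsPolicy π') (hπ : IsPolicy π)
    (hd' : IsD M π' d') (hd : IsD M π d) :
    ∑ s, |d' s - d s| ≤ (M.γ / (1 - M.γ) ^ 2) * polDist π' π := by
  classical
  have hγ0 := M.γ_pos
  have hγ1 := M.γ_lt_one
  have h1γ : (0:ℝ) < 1 - M.γ := by linarith
  -- transition kernels
  set K : S → S → ℝ := fun s s' => ∑ a, π s a * M.P s a s' with hKdef
  set K' : S → S → ℝ := fun s s' => ∑ a, π' s a * M.P s a s' with hK'def
  have hK0 : ∀ s s', 0 ≤ K s s' := fun s s' =>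
    Finset.sum_nonneg fun a _ => mul_nonneg (hπ.1 s a) (M.P_nonneg s a s')
  have hK'0 : ∀ s s', 0 ≤ K' s s' := fun s s' =>
    Finset.sum_nonneg fun a _ => mul_nonneg (hπ'.1 s a) (M.P_nonneg s a s')
  have hKrow : ∀ s, ∑ s', K s s' = 1 := by
    intro s
    rw [Finset.sum_comm]
    simp only [← Finset.mul_sum, M.P_sum_one, mul_one, hπ.2 s]
  have hK'row : ∀ s, ∑ s', K' s s' = 1 := by
    intro s
    rw [Finset.sum_comm]
    simp only [← Finset.mul_sum, M.P_sum_one, mul_one, hπ'.2 s]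
  -- polDist bounds
  have hbdd : BddAbove (Set.range fun s : S => ∑ a, |π' s a - π s a|) :=
    Set.Finite.bddAbove (Set.finite_range _)
  have hδ : ∀ s : S, ∑ a, |π' s a - π s a| ≤ polDist π' π := fun s => le_ciSup hbdd s
  have hδ0 : 0 ≤ polDist π' π :=
    le_trans (Finset.sum_nonneg fun a _ => abs_nonneg _) (hδ (Classical.arbitrary S))
  -- kernel difference row bound
  have hKdiff : ∀ s, ∑ s', |K' s s' - K s s'| ≤ polDist π' π := by
    intro s
    have h1 : ∀ s', |K' s s' - K s s'| ≤ ∑ a, |π' s a - π s a| * M.P s a s' := by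
      intro s'
      have : K' s s' - K s s' = ∑ a, (π' s a - π s a) * M.P s a s' := by
        simp [hKdef, hK'def, ← Finset.sum_sub_distrib, sub_mul]
      rw [this]
      refine (Finset.abs_sum_le_sum_abs _ _).trans (le_of_eq ?_)
      refine Finset.sum_congr rfl fun a _ => ?_
      rw [abs_mul, abs_of_nonneg (M.P_nonneg s a s')]
    calc ∑ s', |K' s s' - K s s'| ≤ ∑ s', ∑ a, |π' s a - π s a| * M.P s a s' :=
          Finset.sum_le_sum fun s' _ => h1 s'
      _ = ∑ a, |π' s a - π s a| := by
          rw [Finset.sum_comm]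
          simp only [← Finset.mul_sum, M.P_sum_one, mul_one]
      _ ≤ polDist π' π := hδ s
  -- step 1: ∑ |d s| ≤ 1
  have hdsum : ∑ s, |d s| ≤ 1 := by
    have key : ∀ s', |d s'| ≤ (1 - M.γ) * (if s' = M.s0 then 1 else 0)
        + M.γ * ∑ s, |d s| * K s s' := by
      intro s'
      rw [hd s']
      refine (abs_add_le _ _).trans (add_le_add ?_ ?_)
      · rw [abs_mul, abs_of_nonneg (by linarith : (0:ℝ) ≤ 1 - M.γ)]
        gcongr
        split <;> simp
      · rw [abs_mul, abs_of_nonneg (le_of_lt hγ0)]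
        gcongr
        refine (Finset.abs_sum_le_sum_abs _ _).trans (Finset.sum_le_sum fun s _ => ?_)
        rw [abs_mul, abs_of_nonneg (hK0 s s')]
    have h2 : ∑ s', |d s'| ≤ (1 - M.γ) + M.γ * ∑ s, |d s| := by
      calc ∑ s', |d s'| ≤ ∑ s', ((1 - M.γ) * (if s' = M.s0 then 1 else 0)
            + M.γ * ∑ s, |d s| * K s s') := Finset.sum_le_sum fun s' _ => key s'
        _ = (1 - M.γ) + M.γ * ∑ s, |d s| := by
            rw [Finset.sum_add_distrib, ← Finset.mul_sum, ← Finset.mul_sum]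
            rw [Finset.sum_comm]
            simp only [← Finset.mul_sum, hKrow, mul_one]
            rw [Finset.sum_ite_eq' Finset.univ M.s0 (fun _ => (1:ℝ))]
            simp
    nlinarith [h2]
  -- step 2: recursion for the difference
  have key2 : ∀ s', |d' s' - d s'| ≤
      M.γ * ∑ s, |d' s - d s| * K' s s' + M.γ * ∑ s, |d s| * |K' s s' - K s s'| := by
    intro s'
    have heq : d' s' - d s' =
        M.γ * ∑ s, (d' s - d s) * K' s s' + M.γ * ∑ s, d s * (K' s s' - K s s') := by
      rw [hd' s', hd s']
      have hsplit : ∀ s : S, (d' s - d s) * K' s s' + d s * (K' s s' - K s s')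
          = d' s * K' s s' - d s * K s s' := fun s => by ring
      rw [← mul_add, ← Finset.sum_add_distrib]
      simp only [hsplit]
      rw [Finset.sum_sub_distrib, mul_sub]
      simp only [hKdef, hK'def]
      ring
    rw [heq]
    refine (abs_add_le _ _).trans (add_le_add ?_ ?_)
    · rw [abs_mul, abs_of_nonneg (le_of_lt hγ0)]
      gcongr
      refine (Finset.abs_sum_le_sum_abs _ _).trans (Finset.sum_le_sum fun s _ => ?_)
      rw [abs_mul, abs_of_nonneg (hK'0 s s')]
    · rw [abs_mul, abs_of_nonneg (le_of_lt hγ0)]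
      gcongr
      refine (Finset.abs_sum_le_sum_abs _ _).trans (Finset.sum_le_sum fun s _ => ?_)
      rw [abs_mul]
  have h3 : ∑ s', |d' s' - d s'| ≤
      M.γ * ∑ s, |d' s - d s| + M.γ * polDist π' π := by
    calc ∑ s', |d' s' - d s'|
        ≤ ∑ s', (M.γ * ∑ s, |d' s - d s| * K' s s' + M.γ * ∑ s, |d s| * |K' s s' - K s s'|) :=
          Finset.sum_le_sum fun s' _ => key2 s'
      _ = M.γ * ∑ s, |d' s - d s| + M.γ * ∑ s, |d s| * ∑ s', |K' s s' - K s s'| := by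
          rw [Finset.sum_add_distrib, ← Finset.mul_sum, ← Finset.mul_sum]
          congr 1
          · rw [Finset.sum_comm]
            simp only [← Finset.mul_sum, hK'row, mul_one]
          · rw [Finset.sum_comm]
            congr 1
            exact Finset.sum_congr rfl fun s _ => (Finset.mul_sum _ _ _).symm
      _ ≤ M.γ * ∑ s, |d' s - d s| + M.γ * polDist π' π := by
          gcongr
          calc ∑ s, |d s| * ∑ s', |K' s s' - K s s'|
              ≤ ∑ s, |d s| * polDist π' π :=
                Finset.sum_le_sum fun s _ => mul_le_mul_of_nonneg_left (hKdiff s) (abs_nonneg _)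
            _ = (∑ s, |d s|) * polDist π' π := by rw [Finset.sum_mul]
            _ ≤ 1 * polDist π' π := mul_le_mul_of_nonneg_right hdsum hδ0
            _ = polDist π' π := one_mul _
  -- conclude
  have h4 : ∑ s, |d' s - d s| ≤ M.γ / (1 - M.γ) * polDist π' π := by
    rw [div_mul_eq_mul_div, le_div_iff₀ h1γ]
    nlinarith [h3]
  refine h4.trans ?_
  gcongr
  nlinarith
end
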